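/- arXiv:2310.10231 — 7 statements merged into one kernel-verified Lean document; each statement's English description precedes it below -/
import Mathlib

section
/- Let v₂ < 0 < v₁ be real numbers, λ > 0, ξ > 0, t > 0, and let x ∈ ℝ satisfy v₂t < x < v₁t and x ≠ 0; set M_x = max(x/v₁, x/v₂) (so that 0 < M_x < t). Then ∫_{M_x}^{t} e^{−ξs}·(x − v₂s)/(1 + λs)² ds = ((v₂ + λx)/λ²)·( e^{−ξM_x}/(1 + λM_x) − e^{−ξt}/(1 + λt) ) − (e^{ξ/λ}/λ²)·( xξ + v₂(λ + ξ)/λ )·Γ(0, (M_x + 1/λ)ξ, (t + 1/λ)ξ). -/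
open MeasureTheory Real Filter Topology Set

noncomputable section

namespace TelegraphReset

open Classical in
/-- Real-valued indicator of a proposition. -/
def ind (P : Prop) : ℝ := if P then 1 else 0

/-- Generalized incomplete gamma function `Γ(0, z₀, z₁) = ∫_{z₀}^{z₁} u⁻¹ e^{-u} du`. -/
def iGamma (z₀ z₁ : ℝ) : ℝ := ∫ u in z₀..z₁, u⁻¹ * Real.exp (-u)

/-- Upper incomplete gamma function `Γ(0, a) = ∫_a^∞ u⁻¹ e^{-u} du`. -/
def uGamma (a : ℝ) : ℝ := ∫ u in Set.Ioi a, u⁻¹ * Real.exp (-u)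

/-- `τ(x,t) = (x - v₂ t)/(v₁ - v₂)`. -/
def tauF (v₁ v₂ x t : ℝ) : ℝ := (x - v₂ * t) / (v₁ - v₂)

/-- The two velocities, indexed by `1` and `2`. -/
def vel (v₁ v₂ : ℝ) : ℕ → ℝ := fun n => if n = 1 then v₁ else v₂

/-- `Γ_λ^ξ(x,t)`, defined piecewise according to the sign of `v₂`. -/
def GamL (v₁ v₂ lam xi x t : ℝ) : ℝ :=
  if v₂ < 0 then iGamma ((max (x / v₁) (x / v₂) + 1 / lam) * xi) ((t + 1 / lam) * xi)
  else iGamma ((x / v₁ + 1 / lam) * xi) ((min (x / v₂) t + 1 / lam) * xi)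

/-- `Θ_λ^ξ(x,t)`, defined piecewise according to the sign of `v₂`. -/
def Theta (v₁ v₂ lam xi x t : ℝ) : ℝ :=
  if v₂ < 0 then
    Real.exp (-(xi * max (x / v₁) (x / v₂))) / (1 + lam * max (x / v₁) (x / v₂))
      - Real.exp (-(xi * t)) / (1 + lam * t)
  else
    Real.exp (-(xi * (x / v₁))) / (1 + lam * (x / v₁))
      - Real.exp (-(xi * min (x / v₂) t)) / (1 + lam * min (x / v₂) t)

/-- Closed-form sub-density `P_{j,j}(x,t)` (Eq. (21)). -/
def Pss (v₁ v₂ lam xi : ℝ) (j : ℕ) (x t : ℝ) : ℝ :=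
  ind (v₂ * t < x ∧ x < v₁ * t) * Real.exp (-(xi * t)) * lam ^ 2 *
      tauF v₁ v₂ x t ^ (2 - j) * (t - tauF v₁ v₂ x t) ^ (j - 1) /
      ((v₁ - v₂) * (1 + lam * t) ^ 2)
  + Real.sign (vel v₁ v₂ j) * ind (0 < x / vel v₁ v₂ j ∧ x / vel v₁ v₂ j < t) * xi *
      Real.exp (-(xi * (x / vel v₁ v₂ j))) / (vel v₁ v₂ j + lam * x)
  + ind (min (v₂ * t) 0 < x ∧ x < v₁ * t) *
      ((-1 : ℝ) ^ (3 - j) * (xi * (vel v₁ v₂ (3 - j) + lam * x) / (v₁ - v₂) ^ 2) *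
          Theta v₁ v₂ lam xi x t
        + (-1 : ℝ) ^ j * (xi * Real.exp (xi / lam) / (v₁ - v₂) ^ 2) *
            (vel v₁ v₂ (3 - j) * (lam + xi) / lam + x * xi) * GamL v₁ v₂ lam xi x t)

/-- Closed-form sub-density `P_{3-j,j}(x,t)` (Eq. (22)). -/
def Pos (v₁ v₂ lam xi : ℝ) (j : ℕ) (x t : ℝ) : ℝ :=
  ind (v₂ * t < x ∧ x < v₁ * t) * Real.exp (-(xi * t)) * lam *
      (1 + lam * tauF v₁ v₂ x t ^ (j - 1) * (t - tauF v₁ v₂ x t) ^ (2 - j)) /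
      ((v₁ - v₂) * (1 + lam * t) ^ 2)
  + ind (min (v₂ * t) 0 < x ∧ x < v₁ * t) *
      ((-1 : ℝ) ^ j * (xi * (vel v₁ v₂ (3 - j) + lam * x) / (v₁ - v₂) ^ 2) *
          Theta v₁ v₂ lam xi x t
        + (-1 : ℝ) ^ (3 - j) * (xi * Real.exp (xi / lam) / (v₁ - v₂) ^ 2) *
            (vel v₁ v₂ j * (lam + xi) / lam + x * xi
              + (-1 : ℝ) ^ j * xi * (v₁ - v₂) / lam) * GamL v₁ v₂ lam xi x t)

/-- Closed-form reset density `p̃(x,t|v_j)` (Eq. (37)). -/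
def pTil (v₁ v₂ lam xi : ℝ) (j : ℕ) (x t : ℝ) : ℝ :=
  Real.sign (vel v₁ v₂ j) * ind (0 < x / vel v₁ v₂ j ∧ x / vel v₁ v₂ j < t) * xi *
      Real.exp (-(xi * (x / vel v₁ v₂ j))) / (vel v₁ v₂ j + lam * x)
  + ind (v₂ * t < x ∧ x < v₁ * t) * lam * Real.exp (-(xi * t)) /
      ((v₁ - v₂) * (1 + lam * t))
  + ind (min (v₂ * t) 0 < x ∧ x < v₁ * t) *
      (xi * Real.exp (xi / lam) / (v₁ - v₂)) * GamL v₁ v₂ lam xi x t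

/-- First moment `E_j[X̃(t)]` (Eq. (54)). -/
def Emom (v₁ v₂ lam xi : ℝ) (j : ℕ) (t : ℝ) : ℝ :=
  (1 - Real.exp (-(xi * t))) *
      ((v₁ + v₂) / (2 * xi) + (vel v₁ v₂ j - vel v₁ v₂ (3 - j)) / (2 * lam))
  - xi * Real.exp (xi / lam) * (vel v₁ v₂ j - vel v₁ v₂ (3 - j)) / (2 * lam ^ 2) *
      iGamma (xi / lam) (xi / lam * (1 + lam * t))
  + t * Real.exp (-(xi * t)) * (vel v₁ v₂ j - vel v₁ v₂ (3 - j)) / (2 * (1 + lam * t))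

/-- Second moment `E_j[X̃²(t)]` (Eq. (55)). -/
def Smom (v₁ v₂ lam xi : ℝ) (j : ℕ) (t : ℝ) : ℝ :=
  (1 - Real.exp (-(xi * t))) *
      (2 * (v₁ ^ 2 + v₁ * v₂ + v₂ ^ 2) / (3 * xi ^ 2)
        + (2 * vel v₁ v₂ j ^ 2 - v₁ * v₂ - vel v₁ v₂ (3 - j) ^ 2) / (3 * lam) *
            (1 / xi - 1 / lam))
  - t * Real.exp (-(xi * t)) *
      (2 * (v₁ ^ 2 + v₁ * v₂ + v₂ ^ 2) / (3 * xi)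
        + (2 * vel v₁ v₂ j ^ 2 - v₁ * v₂ - vel v₁ v₂ (3 - j) ^ 2) /
            (3 * lam * (1 + lam * t)))
  + xi * Real.exp (xi / lam) *
      (2 * vel v₁ v₂ j ^ 2 - v₁ * v₂ - vel v₁ v₂ (3 - j) ^ 2) / (3 * lam ^ 3) *
      iGamma (xi / lam) (xi / lam * (1 + lam * t))

/-- First moment of the reset-free process. -/
def m1 (v₁ v₂ lam : ℝ) (j : ℕ) (t : ℝ) : ℝ :=
  (v₁ + v₂) * t / 2 + (vel v₁ v₂ j - vel v₁ v₂ (3 - j)) * t / (2 * (1 + lam * t))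

/-- Second moment of the reset-free process (Eq. (63)). -/
def m2 (v₁ v₂ lam : ℝ) (j : ℕ) (t : ℝ) : ℝ :=
  t ^ 2 * (3 * vel v₁ v₂ j ^ 2 + lam * t * (v₁ ^ 2 + v₁ * v₂ + v₂ ^ 2)) /
    (3 * (1 + lam * t))

section

variable {lam xi : ℝ}

lemma iGamma_affine_substitution (hlam : lam ≠ 0) (hxi : xi ≠ 0) (a b : ℝ) :
    iGamma ((a + 1 / lam) * xi) ((b + 1 / lam) * xi)
      = Real.exp (-(xi / lam)) * ∫ s in a..b, lam * Real.exp (-(xi * s)) / (1 + lam * s) := by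
  have hsubst : iGamma ((a + 1 / lam) * xi) ((b + 1 / lam) * xi)
      = xi * ∫ s in a..b, ((s + 1 / lam) * xi)⁻¹ * Real.exp (-((s + 1 / lam) * xi)) := by
    rw [intervalIntegral.integral_comp_add_right (fun u => (u * xi)⁻¹ * Real.exp (-(u * xi))),
      intervalIntegral.integral_comp_mul_right (fun u => u⁻¹ * Real.exp (-u)) hxi,
      smul_eq_mul, ← mul_assoc, mul_inv_cancel₀ hxi, one_mul, iGamma]
  rw [hsubst, ← intervalIntegral.integral_const_mul, ← intervalIntegral.integral_const_mul]
  congr 1 with s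
  have hu : (s + 1 / lam) * xi = xi / lam * (1 + lam * s) := by field_simp; ring
  rw [hu, show -(xi / lam * (1 + lam * s)) = -(xi * s) + -(xi / lam) by field_simp; ring,
    Real.exp_add, mul_inv, inv_div]
  field_simp

lemma hasDerivAt_exp_neg_mul_div {s : ℝ} (hs : 1 + lam * s ≠ 0) :
    HasDerivAt (fun s => Real.exp (-(xi * s)) / (1 + lam * s))
      (-(Real.exp (-(xi * s)) * (xi * (1 + lam * s) + lam) / (1 + lam * s) ^ 2)) s := by
  have hexp : HasDerivAt (fun s => Real.exp (-(xi * s))) (Real.exp (-(xi * s)) * -xi) s :=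
    (((hasDerivAt_id s).const_mul xi).neg.congr_deriv (by ring)).exp
  have hlin : HasDerivAt (fun s => 1 + lam * s) lam s := by
    simpa using ((hasDerivAt_id s).const_mul lam).const_add 1
  exact (hexp.div hlin hs).congr_deriv (by field_simp; ring)

/-- Partial fractions: the first summand is minus the derivative of `e^{-ξ s} / (1 + λ s)`, the
second the kernel of `iGamma` after the substitution `u = (s + 1/λ) ξ`. -/
lemma exp_neg_mul_mul_div_sq_eq (hlam : lam ≠ 0) (x v₂ s : ℝ) :
    Real.exp (-(xi * s)) * (x - v₂ * s) / (1 + lam * s) ^ 2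
      = (v₂ + lam * x) / lam ^ 2 *
          (Real.exp (-(xi * s)) * (xi * (1 + lam * s) + lam) / (1 + lam * s) ^ 2)
        - (x * xi + v₂ * (lam + xi) / lam) / lam ^ 2 *
          (lam * Real.exp (-(xi * s)) / (1 + lam * s)) := by
  field_simp
  ring

theorem integral_exp_neg_mul_mul_div_sq (hlam : lam ≠ 0) (hxi : xi ≠ 0) (x v₂ : ℝ) {a b : ℝ}
    (hab : ∀ s ∈ uIcc a b, 1 + lam * s ≠ 0) :
    ∫ s in a..b, Real.exp (-(xi * s)) * (x - v₂ * s) / (1 + lam * s) ^ 2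
      = (v₂ + lam * x) / lam ^ 2 *
          (Real.exp (-(xi * a)) / (1 + lam * a) - Real.exp (-(xi * b)) / (1 + lam * b))
        - Real.exp (xi / lam) / lam ^ 2 * (x * xi + v₂ * (lam + xi) / lam) *
            iGamma ((a + 1 / lam) * xi) ((b + 1 / lam) * xi) := by
  have hderiv_int : IntervalIntegrable
      (fun s => Real.exp (-(xi * s)) * (xi * (1 + lam * s) + lam) / (1 + lam * s) ^ 2)
      volume a b :=
    (ContinuousOn.div (by fun_prop) (by fun_prop)
      fun s hs => pow_ne_zero 2 (hab s hs)).intervalIntegrable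
  have hkernel_int : IntervalIntegrable
      (fun s => lam * Real.exp (-(xi * s)) / (1 + lam * s)) volume a b :=
    (ContinuousOn.div (by fun_prop) (by fun_prop) hab).intervalIntegrable
  have hftc : ∫ s in a..b, Real.exp (-(xi * s)) * (xi * (1 + lam * s) + lam) / (1 + lam * s) ^ 2
      = Real.exp (-(xi * a)) / (1 + lam * a) - Real.exp (-(xi * b)) / (1 + lam * b) := by
    rw [← neg_sub, ← intervalIntegral.integral_eq_sub_of_hasDerivAt
      (fun s hs => hasDerivAt_exp_neg_mul_div (hab s hs)) hderiv_int.neg,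
      intervalIntegral.integral_neg, neg_neg]
  have hexp : Real.exp (xi / lam) * Real.exp (-(xi / lam)) = 1 := by
    rw [← Real.exp_add, add_neg_cancel, Real.exp_zero]
  rw [intervalIntegral.integral_congr fun s _ => exp_neg_mul_mul_div_sq_eq hlam x v₂ s,
    intervalIntegral.integral_sub (hderiv_int.const_mul _) (hkernel_int.const_mul _),
    intervalIntegral.integral_const_mul, intervalIntegral.integral_const_mul, hftc,
    iGamma_affine_substitution hlam hxi]
  linear_combination ((x * xi + v₂ * (lam + xi) / lam) / lam ^ 2 *
    ∫ s in a..b, lam * Real.exp (-(xi * s)) / (1 + lam * s)) * hexp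

end

theorem integral_identity_general (v₁ v₂ lam xi t x : ℝ)
    (hv2 : v₂ < 0) (hv1 : 0 < v₁) (hlam : 0 < lam) (hxi : 0 < xi) (ht : 0 < t) :
    ∫ s in (max (x / v₁) (x / v₂))..t,
        Real.exp (-(xi * s)) * (x - v₂ * s) / (1 + lam * s) ^ 2
      = (v₂ + lam * x) / lam ^ 2 *
          (Real.exp (-(xi * max (x / v₁) (x / v₂))) / (1 + lam * max (x / v₁) (x / v₂))
            - Real.exp (-(xi * t)) / (1 + lam * t))
        - Real.exp (xi / lam) / lam ^ 2 * (x * xi + v₂ * (lam + xi) / lam) *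
            iGamma ((max (x / v₁) (x / v₂) + 1 / lam) * xi) ((t + 1 / lam) * xi) := by
  have hM : 0 ≤ max (x / v₁) (x / v₂) := by
    rcases le_total 0 x with hx | hx
    · exact le_max_of_le_left (div_nonneg hx hv1.le)
    · exact le_max_of_le_right (div_nonneg_of_nonpos hx hv2.le)
  refine integral_exp_neg_mul_mul_div_sq hlam.ne' hxi.ne' x v₂ fun s hs => ?_
  have hs : 0 ≤ s := le_trans (le_min hM ht.le) hs.1
  positivity

/-- Key integral identity (Eqs. (29)/(31)) used in the proof of Theorem 4.1. -/
theorem integral_identity (v₁ v₂ lam xi t x : ℝ)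
    (hv2 : v₂ < 0) (hv1 : 0 < v₁) (hlam : 0 < lam) (hxi : 0 < xi) (ht : 0 < t)
    (hx1 : v₂ * t < x) (hx2 : x < v₁ * t) (hx0 : x ≠ 0) :
    ∫ s in (max (x / v₁) (x / v₂))..t,
        Real.exp (-(xi * s)) * (x - v₂ * s) / (1 + lam * s) ^ 2
      = (v₂ + lam * x) / lam ^ 2 *
          (Real.exp (-(xi * max (x / v₁) (x / v₂))) / (1 + lam * max (x / v₁) (x / v₂))
            - Real.exp (-(xi * t)) / (1 + lam * t))
        - Real.exp (xi / lam) / lam ^ 2 * (x * xi + v₂ * (lam + xi) / lam) *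
            iGamma ((max (x / v₁) (x / v₂) + 1 / lam) * xi) ((t + 1 / lam) * xi) :=
  integral_identity_general v₁ v₂ lam xi t x hv2 hv1 hlam hxi ht

end TelegraphReset
end
end

section
/- (Theorem 4.1, Eq. (21).) For every j ∈ {1,2}, every t > 0, and every x with min(v₂t, 0) < x < v₁t, one has 1_{v₂t<x<v₁t}·e^{−ξt}·λ²·τ(x,t)^{2−j}(t − τ(x,t))^{j−1}/((v₁−v₂)(1+λt)²) + sgn(v_j)·1_{0<x/v_j<t}·ξe^{−ξx/v_j}/(v_j + λx) + ξ·∫₀^t e^{−ξs}·1_{v₂s<x<v₁s}·λ²·τ(x,s)^{2−j}(s − τ(x,s))^{j−1}/((v₁−v₂)(1+λs)²) ds = P_{j,j}(x,t). (The second summand on the left is the contribution to the reset law of the singular component of mass 1/(1+λs) at x = v_j s of the reset-free law.) -/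
open MeasureTheory Real Filter Topology Set

noncomputable section

namespace TelegraphReset

/-! On `(0, t]` the indicator cuts the integral down to the window `(coneEntry, coneExit)` of
times at which `x` lies strictly inside the cone `(v₂ s, v₁ s)`. There the same-velocity density
equals `±λ² (x - v_{j'} s) / ((v₁ - v₂)² (1 + λ s)²)`, and `e^{-ξ s} λ² (x - w s) / (1 + λ s)²`
integrates in closed form: an elementary part `-(w + λ x) e^{-ξ s} / (1 + λ s)` plus a multiple
of `∫ e^{-ξ s} / (1 + λ s) ds`, which the substitution `u = (s + 1/λ) ξ` turns into
`(e^{ξ/λ} / λ) ∫ u⁻¹ e^{-u} du`, an incomplete gamma function. -/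

theorem continuousOn_inv_mul_exp_neg :
    ContinuousOn (fun u : ℝ => u⁻¹ * exp (-u)) (Ioi 0) :=
  (continuousOn_inv₀.mono fun _ hu => (mem_Ioi.mp hu).ne').mul (by fun_prop)

theorem hasDerivAt_iGamma_right {c r : ℝ} (hc : 0 < c) (hr : 0 < r) :
    HasDerivAt (iGamma c) (r⁻¹ * exp (-r)) r := by
  have hsub : uIcc c r ⊆ Ioi 0 := fun u hu => lt_of_lt_of_le (lt_min hc hr) hu.1
  exact intervalIntegral.integral_hasDerivAt_right
    (continuousOn_inv_mul_exp_neg.mono hsub).intervalIntegrable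
    (continuousOn_inv_mul_exp_neg.stronglyMeasurableAtFilter isOpen_Ioi r hr)
    (continuousOn_inv_mul_exp_neg.continuousAt (Ioi_mem_nhds hr))

theorem integral_exp_mul_sub_div_sq {lam xi w x L U : ℝ} (hlam : 0 < lam) (hxi : 0 < xi)
    (hL : 0 < 1 + lam * L) (hLU : L ≤ U) :
    ∫ s in L..U, exp (-(xi * s)) * lam ^ 2 * (x - w * s) / (1 + lam * s) ^ 2
      = (w + lam * x) * (exp (-(xi * L)) / (1 + lam * L) - exp (-(xi * U)) / (1 + lam * U))
        - exp (xi / lam) * (w * (lam + xi) / lam + x * xi)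
          * iGamma ((L + 1 / lam) * xi) ((U + 1 / lam) * xi) := by
  have hpos : ∀ s ∈ uIcc L U, 0 < 1 + lam * s := fun s hs => by
    rw [uIcc_of_le hLU] at hs
    nlinarith [hs.1]
  have hshift : ∀ s, (s + 1 / lam) * xi = (1 + lam * s) * xi / lam := fun s => by
    field_simp; ring
  have harg : ∀ s ∈ uIcc L U, 0 < (s + 1 / lam) * xi := fun s hs => by
    rw [hshift]
    exact div_pos (mul_pos (hpos s hs) hxi) hlam
  set A := w + lam * x
  set B := exp (xi / lam) * (w * (lam + xi) / lam + x * xi)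
  have hderiv : ∀ s ∈ uIcc L U,
      HasDerivAt (fun s => -(A * (exp (-(xi * s)) / (1 + lam * s)))
          - B * iGamma ((L + 1 / lam) * xi) ((s + 1 / lam) * xi))
        (exp (-(xi * s)) * lam ^ 2 * (x - w * s) / (1 + lam * s) ^ 2) s := fun s hs => by
    have hquot : HasDerivAt (fun s => exp (-(xi * s)) / (1 + lam * s))
        ((exp (-(xi * s)) * -xi * (1 + lam * s) - exp (-(xi * s)) * lam) / (1 + lam * s) ^ 2)
        s := by
      refine HasDerivAt.div ?_ ?_ (hpos s hs).ne'
      · simpa using ((hasDerivAt_id s).const_mul xi).neg.exp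
      · simpa using ((hasDerivAt_id s).const_mul lam).const_add 1
    have hgamma := (hasDerivAt_iGamma_right (harg L left_mem_uIcc) (harg s hs)).comp s
      (by simpa using ((hasDerivAt_id s).add_const (1 / lam)).mul_const xi :
        HasDerivAt (fun s => (s + 1 / lam) * xi) xi s)
    refine ((hquot.const_mul A).neg.sub (hgamma.const_mul B)).congr_deriv ?_
    have hexp : exp (-((1 + lam * s) * xi / lam)) = exp (-(xi * s)) * (exp (xi / lam))⁻¹ := by
      rw [← exp_neg, ← exp_add]; congr 1; field_simp; ring
    have hden := (hpos s hs).ne'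
    rw [hshift, hexp]
    simp only [A, B]
    field_simp
    ring
  have hcont : ContinuousOn
      (fun s => exp (-(xi * s)) * lam ^ 2 * (x - w * s) / (1 + lam * s) ^ 2) (uIcc L U) :=
    ContinuousOn.div (by fun_prop) (by fun_prop) fun s hs => (pow_pos (hpos s hs) 2).ne'
  rw [intervalIntegral.integral_eq_sub_of_hasDerivAt hderiv hcont.intervalIntegrable]
  simp only [iGamma, intervalIntegral.integral_same]
  ring

theorem intervalIntegral_indicator_of_Ioo_subset_of_subset_Icc {g : ℝ → ℝ} {S : Set ℝ}
    {t a b : ℝ} (hS : MeasurableSet S) (ht : 0 ≤ t) (hab : a ≤ b)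
    (hIoo : Ioo a b ⊆ Ioc 0 t ∩ S) (hIcc : Ioc 0 t ∩ S ⊆ Icc a b) :
    ∫ s in (0 : ℝ)..t, S.indicator g s = ∫ s in a..b, g s := by
  rw [intervalIntegral.integral_of_le ht, intervalIntegral.integral_of_le hab,
    setIntegral_indicator hS]
  refine setIntegral_congr_set (EventuallyLE.antisymm ?_ ?_)
  · exact hIcc.eventuallyLE.trans Ioc_ae_eq_Icc.symm.le
  · exact Ioo_ae_eq_Ioc.symm.le.trans hIoo.eventuallyLE

theorem tauF_pow_mul_sub_tauF_pow {v₁ v₂ x s : ℝ} {j : ℕ} (hv : v₂ < v₁) (hj : j = 1 ∨ j = 2) :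
    tauF v₁ v₂ x s ^ (2 - j) * (s - tauF v₁ v₂ x s) ^ (j - 1)
      = (-1) ^ (3 - j) * (x - vel v₁ v₂ (3 - j) * s) / (v₁ - v₂) := by
  have hne : v₁ - v₂ ≠ 0 := (sub_pos.mpr hv).ne'
  rcases hj with rfl | rfl
  · simp [tauF, vel]
  · simp only [tauF, vel, Nat.reduceSub, if_true, pow_zero, pow_one, one_mul]
    field_simp
    ring

theorem sameVel_integrand_eq_indicator {v₁ v₂ lam xi x s : ℝ} {j : ℕ} (hv : v₂ < v₁)
    (hj : j = 1 ∨ j = 2) :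
    exp (-(xi * s)) * ind (v₂ * s < x ∧ x < v₁ * s) * lam ^ 2 *
        tauF v₁ v₂ x s ^ (2 - j) * (s - tauF v₁ v₂ x s) ^ (j - 1) /
        ((v₁ - v₂) * (1 + lam * s) ^ 2)
      = {s | v₂ * s < x ∧ x < v₁ * s}.indicator
          (fun s => (-1) ^ (3 - j) / (v₁ - v₂) ^ 2 *
            (exp (-(xi * s)) * lam ^ 2 * (x - vel v₁ v₂ (3 - j) * s) / (1 + lam * s) ^ 2)) s := by
  by_cases hs : v₂ * s < x ∧ x < v₁ * s
  · have hτ := tauF_pow_mul_sub_tauF_pow (x := x) (s := s) hv hj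
    rw [indicator_of_mem (by exact hs), ind, if_pos hs]
    simp only [div_eq_mul_inv, mul_inv, ← inv_pow] at hτ ⊢
    linear_combination (exp (-(xi * s)) * lam ^ 2 * (v₁ - v₂)⁻¹ * (1 + lam * s)⁻¹ ^ 2) * hτ
  · rw [indicator_of_notMem (by exact hs), ind, if_neg hs]
    simp

/-- For `x` in the cone at time `t`, `{s ∈ (0, t] | v₂ s < x < v₁ s}` is, up to its endpoints,
the interval `(coneEntry v₁ v₂ x, coneExit v₂ x t)`. -/
def coneEntry (v₁ v₂ x : ℝ) : ℝ := if v₂ < 0 then max (x / v₁) (x / v₂) else x / v₁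

def coneExit (v₂ x t : ℝ) : ℝ := if v₂ < 0 then t else min (x / v₂) t

theorem Theta_eq (v₁ v₂ lam xi x t : ℝ) :
    Theta v₁ v₂ lam xi x t
      = exp (-(xi * coneEntry v₁ v₂ x)) / (1 + lam * coneEntry v₁ v₂ x)
        - exp (-(xi * coneExit v₂ x t)) / (1 + lam * coneExit v₂ x t) := by
  unfold Theta coneEntry coneExit
  split_ifs <;> rfl

theorem GamL_eq (v₁ v₂ lam xi x t : ℝ) :
    GamL v₁ v₂ lam xi x t
      = iGamma ((coneEntry v₁ v₂ x + 1 / lam) * xi) ((coneExit v₂ x t + 1 / lam) * xi) := by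
  unfold GamL coneEntry coneExit
  split_ifs <;> rfl

theorem cone_iff_of_neg {v₁ v₂ x s : ℝ} (h₂ : v₂ < 0) (h₁ : 0 < v₁) :
    v₂ * s < x ∧ x < v₁ * s ↔ max (x / v₁) (x / v₂) < s := by
  rw [max_lt_iff, div_lt_iff₀ h₁, div_lt_iff_of_neg h₂, mul_comm s, mul_comm s, and_comm]

theorem cone_iff_of_pos {v₁ v₂ x s : ℝ} (h₂ : 0 < v₂) (h₁ : 0 < v₁) :
    v₂ * s < x ∧ x < v₁ * s ↔ x / v₁ < s ∧ s < x / v₂ := by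
  rw [div_lt_iff₀ h₁, lt_div_iff₀ h₂, mul_comm s, mul_comm s, and_comm]

section Cone

variable {v₁ v₂ x t : ℝ} (hcase : (v₂ < 0 ∧ 0 < v₁) ∨ (0 < v₂ ∧ v₂ < v₁)) (ht : 0 < t)
  (hx₁ : min (v₂ * t) 0 < x) (hx₂ : x < v₁ * t)
include hcase ht hx₁

theorem coneEntry_nonneg : 0 ≤ coneEntry v₁ v₂ x := by
  rcases hcase with ⟨h₂, h₁⟩ | ⟨h₂, h₂₁⟩
  · rw [coneEntry, if_pos h₂]
    rcases le_or_gt 0 x with hx | hx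
    · exact (div_nonneg hx h₁.le).trans (le_max_left _ _)
    · exact (div_pos_of_neg_of_neg hx h₂).le.trans (le_max_right _ _)
  · rw [min_eq_right (mul_pos h₂ ht).le] at hx₁
    rw [coneEntry, if_neg h₂.not_gt]
    exact (div_pos hx₁ (h₂.trans h₂₁)).le

include hx₂

theorem coneEntry_le_coneExit : coneEntry v₁ v₂ x ≤ coneExit v₂ x t := by
  rcases hcase with ⟨h₂, h₁⟩ | ⟨h₂, h₂₁⟩
  · rw [min_eq_left (mul_neg_of_neg_of_pos h₂ ht).le] at hx₁
    rw [coneEntry, coneExit, if_pos h₂, if_pos h₂]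
    exact (cone_iff_of_neg h₂ h₁).mp ⟨hx₁, hx₂⟩ |>.le
  · rw [min_eq_right (mul_pos h₂ ht).le] at hx₁
    rw [coneEntry, coneExit, if_neg h₂.not_gt, if_neg h₂.not_gt]
    exact le_min (div_le_div_of_nonneg_left hx₁.le h₂ h₂₁.le)
      ((div_lt_iff₀ (h₂.trans h₂₁)).mpr (by linarith)).le

theorem intervalIntegral_indicator_cone (g : ℝ → ℝ) :
    ∫ s in (0 : ℝ)..t, {s | v₂ * s < x ∧ x < v₁ * s}.indicator g s
      = ∫ s in coneEntry v₁ v₂ x..coneExit v₂ x t, g s := by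
  have h₀ := coneEntry_nonneg hcase ht hx₁
  have hle := coneEntry_le_coneExit hcase ht hx₁ hx₂
  have hS : MeasurableSet {s | v₂ * s < x ∧ x < v₁ * s} := by measurability
  rcases hcase with ⟨h₂, h₁⟩ | ⟨h₂, h₂₁⟩
  · simp only [coneEntry, coneExit, if_pos h₂] at h₀ hle ⊢
    refine intervalIntegral_indicator_of_Ioo_subset_of_subset_Icc hS ht.le hle ?_ ?_
    · rintro s ⟨hs₁, hs₂⟩
      exact ⟨⟨h₀.trans_lt hs₁, hs₂.le⟩, (cone_iff_of_neg h₂ h₁).mpr hs₁⟩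
    · rintro s ⟨⟨-, hst⟩, hs⟩
      exact ⟨((cone_iff_of_neg h₂ h₁).mp hs).le, hst⟩
  · simp only [coneEntry, coneExit, if_neg h₂.not_gt] at h₀ hle ⊢
    refine intervalIntegral_indicator_of_Ioo_subset_of_subset_Icc hS ht.le hle ?_ ?_
    · rintro s ⟨hs₁, hs₂⟩
      exact ⟨⟨h₀.trans_lt hs₁, hs₂.le.trans (min_le_right _ _)⟩,
        (cone_iff_of_pos h₂ (h₂.trans h₂₁)).mpr ⟨hs₁, hs₂.trans_le (min_le_left _ _)⟩⟩
    · rintro s ⟨⟨-, hst⟩, hs⟩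
      obtain ⟨hs₁, hs₂⟩ := (cone_iff_of_pos h₂ (h₂.trans h₂₁)).mp hs
      exact ⟨hs₁.le, le_min hs₂.le hst⟩

end Cone

theorem eq21_general (v₁ v₂ lam xi : ℝ) (hlam : 0 < lam) (hxi : 0 < xi)
    (hv : v₂ < v₁)
    (hcase : (v₂ < 0 ∧ 0 < v₁) ∨ (0 < v₂ ∧ v₂ < v₁)) :
    ∀ j : ℕ, (j = 1 ∨ j = 2) → ∀ t : ℝ, 0 < t → ∀ x : ℝ,
      min (v₂ * t) 0 < x → x < v₁ * t →
      ind (v₂ * t < x ∧ x < v₁ * t) * Real.exp (-(xi * t)) * lam ^ 2 *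
          tauF v₁ v₂ x t ^ (2 - j) * (t - tauF v₁ v₂ x t) ^ (j - 1) /
          ((v₁ - v₂) * (1 + lam * t) ^ 2)
      + Real.sign (vel v₁ v₂ j) * ind (0 < x / vel v₁ v₂ j ∧ x / vel v₁ v₂ j < t) * xi *
          Real.exp (-(xi * (x / vel v₁ v₂ j))) / (vel v₁ v₂ j + lam * x)
      + xi * ∫ s in (0:ℝ)..t,
          Real.exp (-(xi * s)) * ind (v₂ * s < x ∧ x < v₁ * s) * lam ^ 2 *
            tauF v₁ v₂ x s ^ (2 - j) * (s - tauF v₁ v₂ x s) ^ (j - 1) /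
            ((v₁ - v₂) * (1 + lam * s) ^ 2)
      = Pss v₁ v₂ lam xi j x t := by
  intro j hj t ht x hx₁ hx₂
  have h₀ := coneEntry_nonneg hcase ht hx₁
  have hle := coneEntry_le_coneExit hcase ht hx₁ hx₂
  have hcone : ind (min (v₂ * t) 0 < x ∧ x < v₁ * t) = 1 := if_pos ⟨hx₁, hx₂⟩
  simp_rw [sameVel_integrand_eq_indicator hv hj]
  rw [intervalIntegral_indicator_cone hcase ht hx₁ hx₂, intervalIntegral.integral_const_mul,
    integral_exp_mul_sub_div_sq hlam hxi (by positivity) hle, Pss, Theta_eq, GamL_eq, hcone]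
  rcases hj with rfl | rfl <;> norm_num <;> field_simp <;> ring

/-- Theorem 4.1, Eq. (21): the reset-renewal transform of the same-velocity
sub-density equals the closed form `P_{j,j}`. -/
theorem eq21 (v₁ v₂ lam xi : ℝ) (hlam : 0 < lam) (hxi : 0 < xi)
    (hv : v₂ < v₁) (hv1 : v₁ ≠ 0) (hv2 : v₂ ≠ 0)
    (hcase : (v₂ < 0 ∧ 0 < v₁) ∨ (0 < v₂ ∧ v₂ < v₁)) :
    ∀ j : ℕ, (j = 1 ∨ j = 2) → ∀ t : ℝ, 0 < t → ∀ x : ℝ,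
      min (v₂ * t) 0 < x → x < v₁ * t →
      ind (v₂ * t < x ∧ x < v₁ * t) * Real.exp (-(xi * t)) * lam ^ 2 *
          tauF v₁ v₂ x t ^ (2 - j) * (t - tauF v₁ v₂ x t) ^ (j - 1) /
          ((v₁ - v₂) * (1 + lam * t) ^ 2)
      + Real.sign (vel v₁ v₂ j) * ind (0 < x / vel v₁ v₂ j ∧ x / vel v₁ v₂ j < t) * xi *
          Real.exp (-(xi * (x / vel v₁ v₂ j))) / (vel v₁ v₂ j + lam * x)
      + xi * ∫ s in (0:ℝ)..t,
          Real.exp (-(xi * s)) * ind (v₂ * s < x ∧ x < v₁ * s) * lam ^ 2 *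
            tauF v₁ v₂ x s ^ (2 - j) * (s - tauF v₁ v₂ x s) ^ (j - 1) /
            ((v₁ - v₂) * (1 + lam * s) ^ 2)
      = Pss v₁ v₂ lam xi j x t :=
  eq21_general v₁ v₂ lam xi hlam hxi hv hcase

end TelegraphReset
end
end

section
/- (Theorem 4.1, Eq. (22).) For every j ∈ {1,2}, every t > 0, and every x with min(v₂t, 0) < x < v₁t, one has 1_{v₂t<x<v₁t}·e^{−ξt}·λ·(1 + λ·τ(x,t)^{j−1}(t − τ(x,t))^{2−j})/((v₁−v₂)(1+λt)²) + ξ·∫₀^t e^{−ξs}·1_{v₂s<x<v₁s}·λ·(1 + λ·τ(x,s)^{j−1}(s − τ(x,s))^{2−j})/((v₁−v₂)(1+λs)²) ds = P_{j',j}(x,t), where j' = 3 − j. -/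
open MeasureTheory Real Filter Topology Set

noncomputable section

namespace TelegraphReset

/-! On the window of times `s ∈ (0, t]` at which `x` lies strictly inside the cone
`v₂ s < x < v₁ s`, up to a null set an interval `(a, b]`, the integrand is the partial-fraction combination
`A e^{-ξs}/(1+λs)² + B e^{-ξs}/(1+λs)`. Integrating the first term by parts reduces it to the
second, up to the boundary terms that make up `Θ_λ^ξ`, and the substitution `u = ξ(s + 1/λ)`
turns the second into `e^{ξ/λ}/λ · Γ(0, (a+1/λ)ξ, (b+1/λ)ξ)`. -/

lemma integral_exp_div_one_add_mul {lam xi : ℝ} (hlam : lam ≠ 0) (hxi : xi ≠ 0) (a b : ℝ) :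
    ∫ s in a..b, Real.exp (-(xi * s)) / (1 + lam * s)
      = Real.exp (xi / lam) / lam * iGamma ((a + 1 / lam) * xi) ((b + 1 / lam) * xi) := by
  have hpt : ∀ s : ℝ, Real.exp (-(xi * s)) / (1 + lam * s)
      = xi * (Real.exp (xi / lam) / lam) *
          ((xi * s + xi / lam)⁻¹ * Real.exp (-(xi * s + xi / lam))) := by
    intro s
    rw [neg_add, Real.exp_add, Real.exp_neg (xi / lam),
      show xi * s + xi / lam = xi * (1 + lam * s) / lam by field_simp; ring]
    rcases eq_or_ne (1 + lam * s) 0 with h | h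
    · simp [h]
    · field_simp
  simp_rw [hpt, intervalIntegral.integral_const_mul,
    intervalIntegral.integral_comp_mul_add (fun u => u⁻¹ * Real.exp (-u)) hxi, iGamma, smul_eq_mul]
  rw [show xi * a + xi / lam = (a + 1 / lam) * xi by ring,
    show xi * b + xi / lam = (b + 1 / lam) * xi by ring]
  field_simp

lemma one_add_mul_pos_of_mem_uIcc {lam a b s : ℝ} (hlam : 0 < lam) (ha : 0 < 1 + lam * a)
    (hab : a ≤ b) (hs : s ∈ uIcc a b) : 0 < 1 + lam * s := by
  rw [uIcc_of_le hab] at hs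
  nlinarith [hs.1]

lemma integral_exp_div_one_add_mul_sq {lam xi a b : ℝ} (hlam : 0 < lam)
    (ha : 0 < 1 + lam * a) (hab : a ≤ b) :
    ∫ s in a..b, Real.exp (-(xi * s)) / (1 + lam * s) ^ 2
      = Real.exp (-(xi * a)) / (lam * (1 + lam * a)) - Real.exp (-(xi * b)) / (lam * (1 + lam * b))
        - xi / lam * ∫ s in a..b, Real.exp (-(xi * s)) / (1 + lam * s) := by
  have hpos := fun s => one_add_mul_pos_of_mem_uIcc (s := s) hlam ha hab
  have hu : ∀ s ∈ uIcc a b, HasDerivAt (fun s => Real.exp (-(xi * s)))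
      (-xi * Real.exp (-(xi * s))) s := fun s _ => by
    simpa [mul_comm] using ((hasDerivAt_id s).const_mul xi).neg.exp
  have hv : ∀ s ∈ uIcc a b, HasDerivAt (fun s => -(lam * (1 + lam * s))⁻¹)
      (1 / (1 + lam * s) ^ 2) s := fun s hs => by
    have h := hpos s hs
    refine (((((hasDerivAt_id s).const_mul lam).const_add 1).const_mul lam).inv
      (by simp only [id]; positivity)).neg.congr_deriv ?_
    simp only [id]
    field_simp
  have hv' : ContinuousOn (fun s => 1 / (1 + lam * s) ^ 2) (uIcc a b) :=
    continuousOn_const.div (by fun_prop) fun s hs => pow_ne_zero _ (hpos s hs).ne'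
  have hparts := intervalIntegral.integral_mul_deriv_eq_deriv_mul hu hv
    ((by fun_prop : Continuous fun s => -xi * Real.exp (-(xi * s))).intervalIntegrable _ _)
    hv'.intervalIntegrable
  have hint : ∀ s, -xi * Real.exp (-(xi * s)) * -(lam * (1 + lam * s))⁻¹
      = xi / lam * (Real.exp (-(xi * s)) / (1 + lam * s)) := fun s => by
    simp only [mul_inv, div_eq_mul_inv]; ring
  simp only [mul_one_div, hint, intervalIntegral.integral_const_mul] at hparts
  rw [hparts]
  ring

lemma integral_ind_mul_eq_of_ae_eq_Ioc {p : ℝ → Prop} (hp : MeasurableSet {s | p s}) (G : ℝ → ℝ)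
    {t₀ t a b : ℝ} (ht : t₀ ≤ t) (hab : a ≤ b)
    (h : ({s | p s} ∩ Ioc t₀ t : Set ℝ) =ᵐ[volume] Ioc a b) :
    ∫ s in t₀..t, ind (p s) * G s = ∫ s in a..b, G s := by
  have hind : ∀ s, ind (p s) * G s = {s | p s}.indicator G s := fun s => by
    by_cases hs : p s <;> simp [ind, hs]
  simp_rw [hind, intervalIntegral.integral_of_le ht, intervalIntegral.integral_of_le hab,
    integral_indicator hp, Measure.restrict_restrict hp]
  exact setIntegral_congr_set h

lemma measurableSet_inside_cone (v₁ v₂ x : ℝ) :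
    MeasurableSet {s : ℝ | v₂ * s < x ∧ x < v₁ * s} :=
  (measurableSet_lt (measurable_const_mul v₂) measurable_const).inter
    (measurableSet_lt measurable_const (measurable_const_mul v₁))

lemma inside_cone_inter_Ioc_eq {v₁ v₂ : ℝ} (hv₂ : v₂ < 0) (hv₁ : 0 < v₁) (x t : ℝ) :
    {s : ℝ | v₂ * s < x ∧ x < v₁ * s} ∩ Ioc 0 t = Ioc (max (x / v₁) (x / v₂)) t := by
  ext s
  simp only [mem_inter_iff, mem_ofPred_eq, mem_Ioc, max_lt_iff, div_lt_iff₀ hv₁,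
    div_lt_iff_of_neg hv₂]
  constructor
  · rintro ⟨⟨h₂, h₁⟩, -, hst⟩
    exact ⟨⟨by linarith, by linarith⟩, hst⟩
  · rintro ⟨⟨h₁, h₂⟩, hst⟩
    exact ⟨⟨by linarith, by linarith⟩, by nlinarith, hst⟩

lemma inside_cone_inter_Ioc_ae_eq {v₁ v₂ x : ℝ} (hv₂ : 0 < v₂) (hv₁ : 0 < v₁) (hx : 0 ≤ x)
    (t : ℝ) :
    ({s : ℝ | v₂ * s < x ∧ x < v₁ * s} ∩ Ioc 0 t : Set ℝ)
      =ᵐ[volume] Ioc (x / v₁) (min (x / v₂) t) := by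
  have hcone : {s : ℝ | v₂ * s < x ∧ x < v₁ * s} = Ioo (x / v₁) (x / v₂) := by
    ext s
    simp only [mem_ofPred_eq, mem_Ioo, div_lt_iff₀ hv₁, lt_div_iff₀ hv₂]
    constructor <;> rintro ⟨h₁, h₂⟩ <;> constructor <;> linarith
  have h := (Ioo_ae_eq_Ioc (μ := (volume : Measure ℝ)) (a := x / v₁) (b := x / v₂)).inter
    (EventuallyEq.refl _ (Ioc 0 t))
  rwa [Ioc_inter_Ioc, max_eq_left (div_nonneg hx hv₁.le), ← hcone] at h

lemma tauF_kernel_eq {v₁ v₂ : ℝ} (hv : v₁ ≠ v₂) (lam x s : ℝ) {j : ℕ} (hj : j = 1 ∨ j = 2) :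
    lam * (1 + lam * tauF v₁ v₂ x s ^ (j - 1) * (s - tauF v₁ v₂ x s) ^ (2 - j)) /
        ((v₁ - v₂) * (1 + lam * s) ^ 2)
      = (-1) ^ j * (lam * (vel v₁ v₂ (3 - j) + lam * x) / (v₁ - v₂) ^ 2) / (1 + lam * s) ^ 2
        + (-1) ^ (3 - j) * (lam * vel v₁ v₂ j / (v₁ - v₂) ^ 2) / (1 + lam * s) := by
  have hv' : v₁ - v₂ ≠ 0 := sub_ne_zero.2 hv
  rcases eq_or_ne (1 + lam * s) 0 with hs | hs
  · simp [hs]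
  rcases hj with rfl | rfl <;>
  · simp only [tauF, vel]
    norm_num
    field_simp
    ring

lemma xi_mul_integral_kernel_eq {v₁ v₂ lam xi x t a b : ℝ} {j : ℕ} (hlam : 0 < lam)
    (hxi : xi ≠ 0) (hv : v₁ ≠ v₂) (hj : j = 1 ∨ j = 2) (ht : 0 ≤ t) (ha : 0 ≤ a) (hab : a ≤ b)
    (hcone : ({s : ℝ | v₂ * s < x ∧ x < v₁ * s} ∩ Ioc 0 t : Set ℝ) =ᵐ[volume] Ioc a b) :
    xi * ∫ s in (0:ℝ)..t,
        Real.exp (-(xi * s)) * ind (v₂ * s < x ∧ x < v₁ * s) * lam *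
          (1 + lam * tauF v₁ v₂ x s ^ (j - 1) * (s - tauF v₁ v₂ x s) ^ (2 - j)) /
          ((v₁ - v₂) * (1 + lam * s) ^ 2)
      = (-1 : ℝ) ^ j * (xi * (vel v₁ v₂ (3 - j) + lam * x) / (v₁ - v₂) ^ 2) *
          (Real.exp (-(xi * a)) / (1 + lam * a) - Real.exp (-(xi * b)) / (1 + lam * b))
        + (-1 : ℝ) ^ (3 - j) * (xi * Real.exp (xi / lam) / (v₁ - v₂) ^ 2) *
            (vel v₁ v₂ j * (lam + xi) / lam + x * xi
              + (-1 : ℝ) ^ j * xi * (v₁ - v₂) / lam) *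
            iGamma ((a + 1 / lam) * xi) ((b + 1 / lam) * xi) := by
  set A := (-1 : ℝ) ^ j * (lam * (vel v₁ v₂ (3 - j) + lam * x) / (v₁ - v₂) ^ 2)
  set B := (-1 : ℝ) ^ (3 - j) * (lam * vel v₁ v₂ j / (v₁ - v₂) ^ 2)
  have hint : ∀ s, Real.exp (-(xi * s)) * ind (v₂ * s < x ∧ x < v₁ * s) * lam *
          (1 + lam * tauF v₁ v₂ x s ^ (j - 1) * (s - tauF v₁ v₂ x s) ^ (2 - j)) /
          ((v₁ - v₂) * (1 + lam * s) ^ 2)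
        = ind (v₂ * s < x ∧ x < v₁ * s) *
          (A * (Real.exp (-(xi * s)) / (1 + lam * s) ^ 2)
            + B * (Real.exp (-(xi * s)) / (1 + lam * s))) := fun s => by
    rw [mul_assoc _ lam, mul_div_assoc, tauF_kernel_eq hv lam x s hj]
    ring
  have h1a : 0 < 1 + lam * a := by positivity
  have hpos := fun s => one_add_mul_pos_of_mem_uIcc (s := s) hlam h1a hab
  have hintegrable : ∀ n : ℕ, IntervalIntegrable (fun s => Real.exp (-(xi * s)) / (1 + lam * s) ^ n)
      volume a b := fun n =>
    (ContinuousOn.div (by fun_prop) (by fun_prop)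
      fun s hs => pow_ne_zero _ (hpos s hs).ne').intervalIntegrable
  simp_rw [hint]
  rw [integral_ind_mul_eq_of_ae_eq_Ioc (measurableSet_inside_cone v₁ v₂ x) _ ht hab hcone,
    intervalIntegral.integral_add ((hintegrable 2).const_mul A)
      (by simpa using (hintegrable 1).const_mul B),
    intervalIntegral.integral_const_mul, intervalIntegral.integral_const_mul,
    integral_exp_div_one_add_mul_sq hlam h1a hab, integral_exp_div_one_add_mul hlam.ne' hxi]
  have h1b : 0 < 1 + lam * b := hpos b right_mem_uIcc
  have hv' : v₁ - v₂ ≠ 0 := sub_ne_zero.2 hv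
  simp only [A, B]
  rcases hj with rfl | rfl
  all_goals
    simp only [vel]
    norm_num
    field_simp
    ring

theorem eq22_general (v₁ v₂ lam xi : ℝ) (hlam : 0 < lam) (hxi : 0 < xi)
    (hv : v₂ < v₁)
    (hcase : (v₂ < 0 ∧ 0 < v₁) ∨ (0 < v₂ ∧ v₂ < v₁)) :
    ∀ j : ℕ, (j = 1 ∨ j = 2) → ∀ t : ℝ, 0 < t → ∀ x : ℝ,
      min (v₂ * t) 0 < x → x < v₁ * t →
      ind (v₂ * t < x ∧ x < v₁ * t) * Real.exp (-(xi * t)) * lam *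
          (1 + lam * tauF v₁ v₂ x t ^ (j - 1) * (t - tauF v₁ v₂ x t) ^ (2 - j)) /
          ((v₁ - v₂) * (1 + lam * t) ^ 2)
      + xi * ∫ s in (0:ℝ)..t,
          Real.exp (-(xi * s)) * ind (v₂ * s < x ∧ x < v₁ * s) * lam *
            (1 + lam * tauF v₁ v₂ x s ^ (j - 1) * (s - tauF v₁ v₂ x s) ^ (2 - j)) /
            ((v₁ - v₂) * (1 + lam * s) ^ 2)
      = Pos v₁ v₂ lam xi j x t := by
  intro j hj t ht x hx₁ hx₂
  have hind : ind (min (v₂ * t) 0 < x ∧ x < v₁ * t) = 1 := if_pos ⟨hx₁, hx₂⟩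
  rw [Pos, hind, one_mul, add_right_inj]
  rcases hcase with ⟨hv₂, hv₁⟩ | ⟨hv₂, -⟩
  · have hvt : v₂ * t < x := by rwa [min_eq_left (by nlinarith)] at hx₁
    rw [Theta, GamL, if_pos hv₂, if_pos hv₂]
    refine xi_mul_integral_kernel_eq hlam hxi.ne' hv.ne' hj ht.le ?_ ?_
      (inside_cone_inter_Ioc_eq hv₂ hv₁ x t).eventuallyEq
    · rcases le_total 0 x with hx | hx
      · exact le_max_of_le_left (div_nonneg hx hv₁.le)
      · exact le_max_of_le_right (div_nonneg_of_nonpos hx hv₂.le)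
    · exact max_le ((div_le_iff₀ hv₁).2 (by linarith)) ((div_le_iff_of_neg hv₂).2 (by linarith))
  · have hv₁ : 0 < v₁ := hv₂.trans hv
    have hx : 0 < x := by rwa [min_eq_right (by positivity)] at hx₁
    rw [Theta, GamL, if_neg hv₂.not_gt, if_neg hv₂.not_gt]
    exact xi_mul_integral_kernel_eq hlam hxi.ne' hv.ne' hj ht.le (by positivity)
      (le_min (div_le_div_of_nonneg_left hx.le hv₂ hv.le) ((div_le_iff₀ hv₁).2 (by linarith)))
      (inside_cone_inter_Ioc_ae_eq hv₂ hv₁ hx.le t)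

/-- Theorem 4.1, Eq. (22): the reset-renewal transform of the opposite-velocity
sub-density equals the closed form `P_{3-j,j}`. -/
theorem eq22 (v₁ v₂ lam xi : ℝ) (hlam : 0 < lam) (hxi : 0 < xi)
    (hv : v₂ < v₁) (hv1 : v₁ ≠ 0) (hv2 : v₂ ≠ 0)
    (hcase : (v₂ < 0 ∧ 0 < v₁) ∨ (0 < v₂ ∧ v₂ < v₁)) :
    ∀ j : ℕ, (j = 1 ∨ j = 2) → ∀ t : ℝ, 0 < t → ∀ x : ℝ,
      min (v₂ * t) 0 < x → x < v₁ * t →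
      ind (v₂ * t < x ∧ x < v₁ * t) * Real.exp (-(xi * t)) * lam *
          (1 + lam * tauF v₁ v₂ x t ^ (j - 1) * (t - tauF v₁ v₂ x t) ^ (2 - j)) /
          ((v₁ - v₂) * (1 + lam * t) ^ 2)
      + xi * ∫ s in (0:ℝ)..t,
          Real.exp (-(xi * s)) * ind (v₂ * s < x ∧ x < v₁ * s) * lam *
            (1 + lam * tauF v₁ v₂ x s ^ (j - 1) * (s - tauF v₁ v₂ x s) ^ (2 - j)) /
            ((v₁ - v₂) * (1 + lam * s) ^ 2)
      = Pos v₁ v₂ lam xi j x t :=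
  eq22_general v₁ v₂ lam xi hlam hxi hv hcase

end TelegraphReset
end
end

section
/- (Theorem 4.2, Eq. (37).) For every j ∈ {1,2}, every t > 0, and every x with min(v₂t, 0) < x < v₁t, one has 1_{v₂t<x<v₁t}·e^{−ξt}·λ/((v₁−v₂)(1+λt)) + sgn(v_j)·1_{0<x/v_j<t}·ξe^{−ξx/v_j}/(v_j + λx) + ξ·∫₀^t e^{−ξs}·1_{v₂s<x<v₁s}·λ/((v₁−v₂)(1+λs)) ds = p̃(x,t|v_j), i.e. the reset-renewal transform of the reset-free density λ/((v₁−v₂)(1+λs)) on (v₂s, v₁s) (plus the contribution of the atom of mass 1/(1+λs) at v_j s) equals the closed-form density p̃(x,t|v_j). -/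
open MeasureTheory Real Filter Topology Set

noncomputable section

namespace TelegraphReset

/-!
For fixed `x`, the times `s ∈ (0, t]` with `v₂ s < x < v₁ s` form, up to a null set, the interval
`(M_x, t]` when `v₂ < 0 < v₁` and `(x/v₁, min(x/v₂, t)]` when `0 < v₂ < v₁`. The reset integral is
therefore `λ/(v₁ - v₂)` times the integral of `e^{-ξs}/(1 + λs)` over that window, and the
substitution `u = ξ(s + 1/λ)` turns the latter into `e^{ξ/λ}/λ · Γ(0, ·, ·)`.
-/

-- At `s = -1/λ` both sides vanish, as `0⁻¹ = 0`.
theorem exp_neg_mul_div_one_add_mul_eq {lam xi : ℝ} (hlam : lam ≠ 0) (hxi : xi ≠ 0) (s : ℝ) :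
    exp (-(xi * s)) / (1 + lam * s)
      = exp (xi / lam) / lam * (xi * ((xi * s + xi / lam)⁻¹ * exp (-(xi * s + xi / lam)))) := by
  have hshift : xi * s + xi / lam = xi * (1 + lam * s) / lam := by field_simp; ring
  rw [show -(xi * s + xi / lam) = -(xi * s) + -(xi / lam) by ring, exp_add, exp_neg (xi / lam),
    hshift]
  rcases eq_or_ne (1 + lam * s) 0 with h | h
  · simp [h]
  · field_simp

theorem integral_exp_neg_mul_div_one_add_mul {lam xi : ℝ} (hlam : lam ≠ 0) (hxi : xi ≠ 0)
    (a b : ℝ) :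
    ∫ s in a..b, exp (-(xi * s)) / (1 + lam * s)
      = exp (xi / lam) / lam * iGamma ((a + 1 / lam) * xi) ((b + 1 / lam) * xi) := by
  simp_rw [exp_neg_mul_div_one_add_mul_eq hlam hxi, intervalIntegral.integral_const_mul]
  rw [← smul_eq_mul xi, intervalIntegral.smul_integral_comp_mul_add
    (fun u => u⁻¹ * exp (-u)), iGamma]
  ring_nf

theorem intervalIntegral_ind_mul_eq {P : ℝ → Prop} {g : ℝ → ℝ} {c t a b : ℝ}
    (hca : c ≤ a) (hab : a ≤ b) (hbt : b ≤ t)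
    (hP : ∀ᵐ s, s ∈ Ioc c t → (P s ↔ s ∈ Ioc a b)) :
    ∫ s in c..t, ind (P s) * g s = ∫ s in a..b, g s := by
  have hind : ∀ᵐ s ∂volume.restrict (Ioc c t), ind (P s) * g s = (Ioc a b).indicator g s := by
    refine (ae_restrict_iff' measurableSet_Ioc).2 (hP.mono fun s hs hst => ?_)
    by_cases hs' : s ∈ Ioc a b
    · simp [ind, indicator_of_mem hs', (hs hst).2 hs']
    · simp [ind, indicator_of_notMem hs', mt (hs hst).1 hs']
  rw [intervalIntegral.integral_of_le (hca.trans (hab.trans hbt)),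
    intervalIntegral.integral_of_le hab, integral_congr_ae hind,
    setIntegral_indicator measurableSet_Ioc, inter_eq_right.2 (Ioc_subset_Ioc hca hbt)]

theorem mul_lt_and_lt_mul_iff_of_neg_of_pos {v₁ v₂ x s : ℝ} (hv₂ : v₂ < 0) (hv₁ : 0 < v₁) :
    (v₂ * s < x ∧ x < v₁ * s) ↔ max (x / v₁) (x / v₂) < s := by
  rw [max_lt_iff, div_lt_iff₀ hv₁, div_lt_iff_of_neg hv₂]
  constructor <;> rintro ⟨h₁, h₂⟩ <;> constructor <;> linarith

theorem mul_lt_and_lt_mul_iff_of_pos {v₁ v₂ x s : ℝ} (hv₂ : 0 < v₂) (hv₁ : 0 < v₁) :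
    (v₂ * s < x ∧ x < v₁ * s) ↔ x / v₁ < s ∧ s < x / v₂ := by
  rw [div_lt_iff₀ hv₁, lt_div_iff₀ hv₂]
  constructor <;> rintro ⟨h₁, h₂⟩ <;> constructor <;> linarith

theorem integral_reset_free_density_of_window {v₁ v₂ lam xi x t a b : ℝ} (hlam : lam ≠ 0)
    (hxi : xi ≠ 0) (ha : 0 ≤ a) (hab : a ≤ b) (hbt : b ≤ t)
    (hwindow : ∀ᵐ s, s ∈ Ioc 0 t → ((v₂ * s < x ∧ x < v₁ * s) ↔ s ∈ Ioc a b)) :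
    ∫ s in (0:ℝ)..t, exp (-(xi * s)) * ind (v₂ * s < x ∧ x < v₁ * s) * lam /
        ((v₁ - v₂) * (1 + lam * s))
      = exp (xi / lam) / (v₁ - v₂) * iGamma ((a + 1 / lam) * xi) ((b + 1 / lam) * xi) := by
  have hintegrand : ∀ s, exp (-(xi * s)) * ind (v₂ * s < x ∧ x < v₁ * s) * lam /
      ((v₁ - v₂) * (1 + lam * s))
        = ind (v₂ * s < x ∧ x < v₁ * s) * (lam / (v₁ - v₂) * (exp (-(xi * s)) / (1 + lam * s))) :=
    fun s => by simp only [div_eq_mul_inv, mul_inv]; ring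
  simp_rw [hintegrand]
  rw [intervalIntegral_ind_mul_eq ha hab hbt hwindow, intervalIntegral.integral_const_mul,
    integral_exp_neg_mul_div_one_add_mul hlam hxi]
  field_simp

theorem integral_reset_free_density {v₁ v₂ lam xi x t : ℝ} (hlam : lam ≠ 0) (hxi : xi ≠ 0)
    (hcase : (v₂ < 0 ∧ 0 < v₁) ∨ (0 < v₂ ∧ v₂ < v₁))
    (ht : 0 < t) (hx_gt : min (v₂ * t) 0 < x) (hx_lt : x < v₁ * t) :
    ∫ s in (0:ℝ)..t, exp (-(xi * s)) * ind (v₂ * s < x ∧ x < v₁ * s) * lam /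
        ((v₁ - v₂) * (1 + lam * s))
      = exp (xi / lam) / (v₁ - v₂) * GamL v₁ v₂ lam xi x t := by
  rcases hcase with ⟨hv₂, hv₁⟩ | ⟨hv₂, hv⟩
  · rw [min_eq_left (mul_neg_of_neg_of_pos hv₂ ht).le] at hx_gt
    rw [GamL, if_pos hv₂]
    refine integral_reset_free_density_of_window hlam hxi ?_ ?_ le_rfl
      (ae_of_all _ fun s hs => ?_)
    · rcases le_or_gt 0 x with hx | hx
      · exact le_max_of_le_left (div_nonneg hx hv₁.le)
      · exact le_max_of_le_right (div_pos_of_neg_of_neg hx hv₂).le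
    · exact max_le ((div_le_iff₀ hv₁).2 (by linarith)) ((div_le_iff_of_neg hv₂).2 (by linarith))
    · simp [mul_lt_and_lt_mul_iff_of_neg_of_pos hv₂ hv₁, hs.2]
  · have hv₁ : 0 < v₁ := hv₂.trans hv
    rw [min_eq_right (mul_pos hv₂ ht).le] at hx_gt
    rw [GamL, if_neg hv₂.not_gt]
    refine integral_reset_free_density_of_window hlam hxi (div_pos hx_gt hv₁).le
      (le_min ?_ ((div_le_iff₀ hv₁).2 (by linarith))) (min_le_right _ _) ?_
    · exact div_le_div_of_nonneg_left hx_gt.le hv₂ hv.le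
    · have hne : ∀ᵐ s : ℝ, s ≠ x / v₂ := Measure.ae_ne volume _
      filter_upwards [hne] with s hne hs
      rw [mul_lt_and_lt_mul_iff_of_pos hv₂ hv₁, mem_Ioc, le_min_iff, hne.le_iff_lt]
      exact ⟨fun h => ⟨h.1, h.2, hs.2⟩, fun h => ⟨h.1, h.2.1⟩⟩

theorem eq37_general (v₁ v₂ lam xi : ℝ) (hlam : 0 < lam) (hxi : 0 < xi)
    (hcase : (v₂ < 0 ∧ 0 < v₁) ∨ (0 < v₂ ∧ v₂ < v₁)) :
    ∀ j : ℕ, (j = 1 ∨ j = 2) → ∀ t : ℝ, 0 < t → ∀ x : ℝ,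
      min (v₂ * t) 0 < x → x < v₁ * t →
      ind (v₂ * t < x ∧ x < v₁ * t) * Real.exp (-(xi * t)) * lam /
          ((v₁ - v₂) * (1 + lam * t))
      + Real.sign (vel v₁ v₂ j) * ind (0 < x / vel v₁ v₂ j ∧ x / vel v₁ v₂ j < t) * xi *
          Real.exp (-(xi * (x / vel v₁ v₂ j))) / (vel v₁ v₂ j + lam * x)
      + xi * ∫ s in (0:ℝ)..t,
          Real.exp (-(xi * s)) * ind (v₂ * s < x ∧ x < v₁ * s) * lam /
            ((v₁ - v₂) * (1 + lam * s))
      = pTil v₁ v₂ lam xi j x t := by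
  intro j _ t ht x hx_gt hx_lt
  have hind : ind (min (v₂ * t) 0 < x ∧ x < v₁ * t) = 1 := if_pos ⟨hx_gt, hx_lt⟩
  rw [integral_reset_free_density hlam.ne' hxi.ne' hcase ht hx_gt hx_lt, pTil, hind]
  ring

/-- Theorem 4.2, Eq. (37): the reset-renewal transform of the reset-free density
(plus the atom contribution) equals the closed-form density `p̃(x,t|v_j)`. -/
theorem eq37 (v₁ v₂ lam xi : ℝ) (hlam : 0 < lam) (hxi : 0 < xi)
    (hv : v₂ < v₁) (hv1 : v₁ ≠ 0) (hv2 : v₂ ≠ 0)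
    (hcase : (v₂ < 0 ∧ 0 < v₁) ∨ (0 < v₂ ∧ v₂ < v₁)) :
    ∀ j : ℕ, (j = 1 ∨ j = 2) → ∀ t : ℝ, 0 < t → ∀ x : ℝ,
      min (v₂ * t) 0 < x → x < v₁ * t →
      ind (v₂ * t < x ∧ x < v₁ * t) * Real.exp (-(xi * t)) * lam /
          ((v₁ - v₂) * (1 + lam * t))
      + Real.sign (vel v₁ v₂ j) * ind (0 < x / vel v₁ v₂ j ∧ x / vel v₁ v₂ j < t) * xi *
          Real.exp (-(xi * (x / vel v₁ v₂ j))) / (vel v₁ v₂ j + lam * x)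
      + xi * ∫ s in (0:ℝ)..t,
          Real.exp (-(xi * s)) * ind (v₂ * s < x ∧ x < v₁ * s) * lam /
            ((v₁ - v₂) * (1 + lam * s))
      = pTil v₁ v₂ lam xi j x t :=
  eq37_general v₁ v₂ lam xi hlam hxi hcase

end TelegraphReset
end
end

section
/- (Theorem 4.2, Eq. (38): flow function.) For every j ∈ {1,2}, every t > 0, and every x with min(v₂t, 0) < x < v₁t, the difference of the two closed-form sub-densities of Theorem 4.1 satisfies P_{1,j}(x,t) − P_{2,j}(x,t) = 1_{v₂t<x<v₁t}·λe^{−ξt}·(λ(2τ(x,t) − t) + (−1)^{j})/((v₁−v₂)(1+λt)²) + sgn(v_j)·(−1)^{j−1}·1_{0<x/v_j<t}·ξe^{−ξx/v_j}/(v_j + λx) + I(x,t)·[ (2ξ(v_{j'} + λx)/(v₁−v₂)²)·Θ_λ^ξ(x,t) − (ξe^{ξ/λ}/(v₁−v₂)²)·( 2v_{j'}ξ(x/v_{j'} + 1/λ) + (v₁ + v₂) )·Γ_λ^ξ(x,t) ], where j' = 3 − j. -/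
open MeasureTheory Real Filter Topology Set

noncomputable section

namespace TelegraphReset

set_option maxHeartbeats 2000000 in
/-- Theorem 4.2, Eq. (38): the flow function, i.e. the difference of the two
closed-form sub-densities of Theorem 4.1. -/
theorem eq38 (v₁ v₂ lam xi : ℝ) (hlam : 0 < lam) (hxi : 0 < xi)
    (hv : v₂ < v₁) (hv1 : v₁ ≠ 0) (hv2 : v₂ ≠ 0)
    (hcase : (v₂ < 0 ∧ 0 < v₁) ∨ (0 < v₂ ∧ v₂ < v₁)) :
    ∀ j : ℕ, (j = 1 ∨ j = 2) → ∀ t : ℝ, 0 < t → ∀ x : ℝ,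
      min (v₂ * t) 0 < x → x < v₁ * t →
      (if j = 1 then Pss v₁ v₂ lam xi 1 x t - Pos v₁ v₂ lam xi 1 x t
        else Pos v₁ v₂ lam xi 2 x t - Pss v₁ v₂ lam xi 2 x t)
      = ind (v₂ * t < x ∧ x < v₁ * t) * lam * Real.exp (-(xi * t)) *
          (lam * (2 * tauF v₁ v₂ x t - t) + (-1 : ℝ) ^ j) /
          ((v₁ - v₂) * (1 + lam * t) ^ 2)
      + Real.sign (vel v₁ v₂ j) * (-1 : ℝ) ^ (j - 1) *
          ind (0 < x / vel v₁ v₂ j ∧ x / vel v₁ v₂ j < t) * xi *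
          Real.exp (-(xi * (x / vel v₁ v₂ j))) / (vel v₁ v₂ j + lam * x)
      + ind (min (v₂ * t) 0 < x ∧ x < v₁ * t) *
          (2 * xi * (vel v₁ v₂ (3 - j) + lam * x) / (v₁ - v₂) ^ 2 *
              Theta v₁ v₂ lam xi x t
            - xi * Real.exp (xi / lam) / (v₁ - v₂) ^ 2 *
                (2 * vel v₁ v₂ (3 - j) * xi * (x / vel v₁ v₂ (3 - j) + 1 / lam)
                  + (v₁ + v₂)) * GamL v₁ v₂ lam xi x t) := by
  intro j hj t ht x hx1 hx2
  have hvne : v₁ - v₂ ≠ 0 := sub_ne_zero.mpr hv.ne'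
  have hlt : (1 : ℝ) + lam * t ≠ 0 := by positivity
  have hlam : lam ≠ 0 := hlam.ne'
  rcases hj with rfl | rfl
  · simp only [Pss, Pos, vel, tauF]
    norm_num
    field_simp
    ring
  · simp only [Pss, Pos, vel, tauF]
    norm_num
    field_simp
    ring


end TelegraphReset
end
end

section
/- (Normalization of the reset law.) For every j ∈ {1,2} and every t > 0, the total mass of the law of the reset telegraph process at time t equals one: e^{−ξt}/(1 + λt) + ∫_{ℝ} p̃(x,t|v_j) dx = 1, where the integrand vanishes outside the bounded interval (min(v₂t,0), v₁t). -/
/-!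
Substituting `x = v s` turns the ballistic term of `p̃` into `∫₀ᵗ ξe^{-ξs}/(1+λs) ds`, and the
incomplete-gamma term, after splitting `(min(v₂t,0), v₁t)` at `0` (resp. `v₂t`) and substituting
`x = v₁ s`, `x = v₂ s` on the pieces, into `ξe^{ξ/λ} ∫₀ᵗ G(s) ds` with
`G(s) = Γ(0, (s+1/λ)ξ, (t+1/λ)ξ)`. Since `G(t) = 0` and `G'(s) = -λe^{-ξ/λ}e^{-ξs}/(1+λs)`,
integration by parts turns the latter into `∫₀ᵗ λsξe^{-ξs}/(1+λs) ds`, so the two add up to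
`∫₀ᵗ ξe^{-ξs} ds = 1 - e^{-ξt}`. The uniform term contributes `λte^{-ξt}/(1+λt)` and the atom
`e^{-ξt}/(1+λt)`, which add up to the missing `e^{-ξt}`.
-/

open MeasureTheory Real Filter Topology Set

noncomputable section

namespace TelegraphReset

lemma intervalIntegrable_inv_mul_exp_neg {a b : ℝ} (ha : 0 < a) (hb : 0 < b) :
    IntervalIntegrable (fun u : ℝ => u⁻¹ * exp (-u)) volume a b := by
  refine ContinuousOn.intervalIntegrable fun u hu => ?_
  have hu : 0 < u := (lt_min ha hb).trans_le hu.1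
  exact ((continuousAt_inv₀ hu.ne').mul (by fun_prop)).continuousWithinAt

lemma iGamma_add_iGamma {a b c : ℝ} (ha : 0 < a) (hb : 0 < b) (hc : 0 < c) :
    iGamma a b + iGamma b c = iGamma a c :=
  intervalIntegral.integral_add_adjacent_intervals (intervalIntegrable_inv_mul_exp_neg ha hb)
    (intervalIntegrable_inv_mul_exp_neg hb hc)

lemma hasDerivAt_iGamma_left {z T : ℝ} (hz : 0 < z) (hT : 0 < T) :
    HasDerivAt (fun a => iGamma a T) (-(z⁻¹ * exp (-z))) z :=
  intervalIntegral.integral_hasDerivAt_left (intervalIntegrable_inv_mul_exp_neg hz hT)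
    ((measurable_inv.mul (measurable_exp.comp measurable_neg)).stronglyMeasurable
      |>.stronglyMeasurableAtFilter)
    ((continuousAt_inv₀ hz.ne').mul (by fun_prop))

/-- `Γ_λ^ξ(x,t)` is `gammaTail lam xi t (max (x/v₁) (x/v₂))` when `v₂ < 0`, and
`gammaTail lam xi t (x/v₁) - gammaTail lam xi t (min (x/v₂) t)` when `0 < v₂`. -/
def gammaTail (lam xi t s : ℝ) : ℝ := iGamma ((s + 1 / lam) * xi) ((t + 1 / lam) * xi)

section gammaTail

variable {lam xi t : ℝ}

lemma gammaTail_self : gammaTail lam xi t t = 0 := intervalIntegral.integral_same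

lemma hasDerivAt_gammaTail (hlam : 0 < lam) (hxi : 0 < xi) (ht : 0 ≤ t) {s : ℝ} (hs : 0 ≤ s) :
    HasDerivAt (gammaTail lam xi t)
      (-(lam * exp (-(xi / lam)) * exp (-(xi * s)) / (1 + lam * s))) s := by
  have hz : 0 < (s + 1 / lam) * xi := by positivity
  have h := (hasDerivAt_iGamma_left hz (by positivity : 0 < (t + 1 / lam) * xi)).comp s
    (((hasDerivAt_id s).add_const (1 / lam)).mul_const xi)
  refine h.congr_deriv ?_
  rw [show -((s + 1 / lam) * xi) = -(xi / lam) + -(xi * s) by ring, exp_add]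
  field_simp
  ring

lemma continuousOn_gammaTail (hlam : 0 < lam) (hxi : 0 < xi) (ht : 0 ≤ t) :
    ContinuousOn (gammaTail lam xi t) (Ici 0) :=
  fun _ hs => (hasDerivAt_gammaTail hlam hxi ht hs).continuousAt.continuousWithinAt

lemma integral_gammaTail_comp_div {v : ℝ} (hv : v ≠ 0) :
    ∫ x in 0..v * t, gammaTail lam xi t (x / v) = v * ∫ s in 0..t, gammaTail lam xi t s := by
  rw [intervalIntegral.integral_comp_div _ hv, zero_div, mul_div_cancel_left₀ _ hv, smul_eq_mul]

theorem integral_exp_div_add_integral_gammaTail (hlam : 0 < lam) (hxi : 0 < xi) (ht : 0 ≤ t) :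
    (∫ s in 0..t, xi * exp (-(xi * s)) / (1 + lam * s))
      + xi * exp (xi / lam) * ∫ s in 0..t, gammaTail lam xi t s = 1 - exp (-(xi * t)) := by
  have hden : ∀ s ∈ uIcc 0 t, 0 < 1 + lam * s := fun s hs => by
    rw [uIcc_of_le ht] at hs
    nlinarith [hs.1]
  have hh : IntervalIntegrable (fun s => xi * exp (-(xi * s)) / (1 + lam * s)) volume 0 t :=
    ContinuousOn.intervalIntegrable (ContinuousOn.div (by fun_prop) (by fun_prop)
      fun s hs => (hden s hs).ne')
  have hg : IntervalIntegrable (gammaTail lam xi t) volume 0 t :=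
    ((continuousOn_gammaTail hlam hxi ht).mono fun s hs => by
      rw [uIcc_of_le ht] at hs; exact hs.1).intervalIntegrable
  rw [← intervalIntegral.integral_const_mul,
    ← intervalIntegral.integral_add hh (hg.const_mul _),
    intervalIntegral.integral_eq_sub_of_hasDerivAt
      (f := fun s => -exp (-(xi * s)) + xi * exp (xi / lam) * (s * gammaTail lam xi t s))
      ?_ (hh.add (hg.const_mul _))]
  · simp only [gammaTail_self, mul_zero, add_zero, neg_zero, exp_zero, zero_mul, sub_neg_eq_add]
    ring
  · intro s hs
    have hs0 : 0 ≤ s := by rw [uIcc_of_le ht] at hs; exact hs.1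
    have h := (((hasDerivAt_id s).const_mul xi).neg.exp.neg).add
      (((hasDerivAt_id s).mul (hasDerivAt_gammaTail hlam hxi ht hs0)).const_mul
        (xi * exp (xi / lam)))
    refine h.congr_deriv ?_
    have h1 := (hden s hs).ne'
    simp only [Pi.neg_apply, id, exp_neg (xi / lam)]
    field_simp
    ring

end gammaTail

lemma ind_mem_mul (s : Set ℝ) (f : ℝ → ℝ) (x : ℝ) :
    ind (x ∈ s) * f x = s.indicator f x := by
  classical
  by_cases h : x ∈ s <;> simp [ind, h]

lemma integrable_ind_mul {a b : ℝ} {f : ℝ → ℝ} (hf : IntervalIntegrable f volume a b) :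
    Integrable fun x => ind (a < x ∧ x < b) * f x := by
  simp_rw [← mem_Ioo, ind_mem_mul]
  exact (hf.def'.mono_set (Ioo_subset_Ioc_self.trans Ioc_subset_uIoc)).integrable_indicator
    measurableSet_Ioo

lemma integral_ind_mul {a b : ℝ} (hab : a ≤ b) (f : ℝ → ℝ) :
    ∫ x, ind (a < x ∧ x < b) * f x = ∫ x in a..b, f x := by
  simp_rw [← mem_Ioo, ind_mem_mul]
  rw [integral_indicator measurableSet_Ioo, intervalIntegral.integral_of_le hab,
    integral_Ioc_eq_integral_Ioo]

section terms

variable {v₁ v₂ lam xi t : ℝ}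

lemma sign_mul_ind_div_eq {v : ℝ} (hv : v ≠ 0) (x : ℝ) :
    Real.sign v * ind (0 < x / v ∧ x / v < t) * xi * exp (-(xi * (x / v))) / (v + lam * x)
      = |v|⁻¹ * (ind (0 < x / v ∧ x / v < t)
          * (xi * exp (-(xi * (x / v))) / (1 + lam * (x / v)))) := by
  have hden : v + lam * x = v * (1 + lam * (x / v)) := by field_simp
  rw [hden, div_eq_mul_inv _ (v * _), mul_inv]
  rcases hv.lt_or_gt with h | h
  · rw [Real.sign_of_neg h, abs_of_neg h, inv_neg]
    ring
  · rw [Real.sign_of_pos h, abs_of_pos h]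
    ring

lemma integrable_and_integral_sign_mul_ind_div {v : ℝ} (hlam : 0 < lam) (hv : v ≠ 0)
    (ht : 0 ≤ t) :
    Integrable (fun x => Real.sign v * ind (0 < x / v ∧ x / v < t) * xi
        * exp (-(xi * (x / v))) / (v + lam * x))
      ∧ ∫ x, Real.sign v * ind (0 < x / v ∧ x / v < t) * xi
          * exp (-(xi * (x / v))) / (v + lam * x)
        = ∫ s in 0..t, xi * exp (-(xi * s)) / (1 + lam * s) := by
  have hh : IntervalIntegrable (fun s => xi * exp (-(xi * s)) / (1 + lam * s)) volume 0 t :=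
    ContinuousOn.intervalIntegrable (ContinuousOn.div (by fun_prop) (by fun_prop) fun s hs => by
      rw [uIcc_of_le ht] at hs
      nlinarith [hs.1])
  simp_rw [sign_mul_ind_div_eq hv]
  refine ⟨((integrable_ind_mul hh).comp_div hv).const_mul _, ?_⟩
  rw [integral_const_mul,
    Measure.integral_comp_div
      (fun s => ind (0 < s ∧ s < t) * (xi * exp (-(xi * s)) / (1 + lam * s))),
    integral_ind_mul ht, smul_eq_mul, ← mul_assoc, inv_mul_cancel₀ (abs_ne_zero.2 hv), one_mul]

lemma integrable_and_integral_ind_mul_exp_div (hv : v₂ < v₁) (ht : 0 ≤ t) :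
    Integrable (fun x => ind (v₂ * t < x ∧ x < v₁ * t) * lam * exp (-(xi * t))
        / ((v₁ - v₂) * (1 + lam * t)))
      ∧ ∫ x, ind (v₂ * t < x ∧ x < v₁ * t) * lam * exp (-(xi * t))
          / ((v₁ - v₂) * (1 + lam * t))
        = lam * t * exp (-(xi * t)) / (1 + lam * t) := by
  have hc : ∀ x, ind (v₂ * t < x ∧ x < v₁ * t) * lam * exp (-(xi * t))
      / ((v₁ - v₂) * (1 + lam * t))
      = ind (v₂ * t < x ∧ x < v₁ * t)
        * (lam * exp (-(xi * t)) / ((v₁ - v₂) * (1 + lam * t))) :=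
    fun x => by ring
  simp_rw [hc]
  refine ⟨integrable_ind_mul intervalIntegrable_const, ?_⟩
  rw [integral_ind_mul (by nlinarith) _, intervalIntegral.integral_const, smul_eq_mul]
  have : v₁ - v₂ ≠ 0 := sub_ne_zero.2 hv.ne'
  field_simp

end terms

section GamL

variable {v₁ v₂ lam xi t : ℝ}

lemma GamL_of_neg (hv₂ : v₂ < 0) (x : ℝ) :
    GamL v₁ v₂ lam xi x t = gammaTail lam xi t (max (x / v₁) (x / v₂)) := by
  rw [GamL, if_pos hv₂, gammaTail]

lemma GamL_of_pos (hlam : 0 < lam) (hxi : 0 < xi) (hv₁ : 0 < v₁) (hv₂ : 0 < v₂)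
    (ht : 0 ≤ t) {x : ℝ} (hx : 0 ≤ x) :
    GamL v₁ v₂ lam xi x t
      = gammaTail lam xi t (x / v₁) - gammaTail lam xi t (min (x / v₂) t) := by
  have hpos : ∀ s : ℝ, 0 ≤ s → 0 < (s + 1 / lam) * xi := fun s hs => by positivity
  rw [GamL, if_neg hv₂.not_gt, gammaTail, gammaTail, eq_sub_iff_add_eq,
    iGamma_add_iGamma (hpos _ (div_nonneg hx hv₁.le))
      (hpos _ (le_min (div_nonneg hx hv₂.le) ht)) (hpos t ht)]

lemma intervalIntegrable_and_integral_GamL_of_neg (hlam : 0 < lam) (hxi : 0 < xi)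
    (hv₁ : 0 < v₁) (hv₂ : v₂ < 0) (ht : 0 ≤ t) :
    IntervalIntegrable (fun x => GamL v₁ v₂ lam xi x t) volume (v₂ * t) (v₁ * t)
      ∧ ∫ x in v₂ * t..v₁ * t, GamL v₁ v₂ lam xi x t
        = (v₁ - v₂) * ∫ s in 0..t, gammaTail lam xi t s := by
  simp_rw [GamL_of_neg hv₂]
  have hmax : Continuous fun x => gammaTail lam xi t (max (x / v₁) (x / v₂)) :=
    (continuousOn_gammaTail hlam hxi ht).comp_continuous (by fun_prop) fun x => by
      rcases le_total 0 x with hx | hx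
      · exact le_max_of_le_left (div_nonneg hx hv₁.le)
      · exact le_max_of_le_right (div_nonneg_of_nonpos hx hv₂.le)
  refine ⟨hmax.intervalIntegrable _ _, ?_⟩
  have hleft : EqOn (fun x => gammaTail lam xi t (max (x / v₁) (x / v₂)))
      (fun x => gammaTail lam xi t (x / v₂)) (uIcc 0 (v₂ * t)) := fun x hx => by
    rw [uIcc_of_ge (by nlinarith)] at hx
    dsimp only
    rw [max_eq_right ((div_nonpos_of_nonpos_of_nonneg hx.2 hv₁.le).trans
      (div_nonneg_of_nonpos hx.2 hv₂.le))]
  have hright : EqOn (fun x => gammaTail lam xi t (max (x / v₁) (x / v₂)))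
      (fun x => gammaTail lam xi t (x / v₁)) (uIcc 0 (v₁ * t)) := fun x hx => by
    rw [uIcc_of_le (by positivity)] at hx
    dsimp only
    rw [max_eq_left ((div_nonpos_of_nonneg_of_nonpos hx.1 hv₂.le).trans
      (div_nonneg hx.1 hv₁.le))]
  rw [← intervalIntegral.integral_add_adjacent_intervals (hmax.intervalIntegrable _ 0)
      (hmax.intervalIntegrable 0 _), intervalIntegral.integral_symm,
    intervalIntegral.integral_congr hleft, intervalIntegral.integral_congr hright,
    integral_gammaTail_comp_div hv₂.ne, integral_gammaTail_comp_div hv₁.ne']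
  ring

lemma intervalIntegrable_and_integral_GamL_of_pos (hlam : 0 < lam) (hxi : 0 < xi)
    (hv : v₂ < v₁) (hv₂ : 0 < v₂) (ht : 0 ≤ t) :
    IntervalIntegrable (fun x => GamL v₁ v₂ lam xi x t) volume 0 (v₁ * t)
      ∧ ∫ x in 0..v₁ * t, GamL v₁ v₂ lam xi x t
        = (v₁ - v₂) * ∫ s in 0..t, gammaTail lam xi t s := by
  have hv₁ : 0 < v₁ := hv₂.trans hv
  have hg := continuousOn_gammaTail hlam hxi ht
  have hinteg : ∀ {f : ℝ → ℝ}, ContinuousOn f (Ici 0) →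
      ∀ {a b : ℝ}, 0 ≤ a → 0 ≤ b → IntervalIntegrable f volume a b :=
    fun hf _ _ ha hb => (hf.mono fun _ hx => (le_min ha hb).trans hx.1).intervalIntegrable
  have h₁ : ContinuousOn (fun x => gammaTail lam xi t (x / v₁)) (Ici 0) :=
    hg.comp (by fun_prop) fun x hx => div_nonneg hx hv₁.le
  have h₂ : ContinuousOn (fun x => gammaTail lam xi t (min (x / v₂) t)) (Ici 0) :=
    hg.comp (by fun_prop) fun x hx => le_min (div_nonneg hx hv₂.le) ht
  have hv₁t : 0 ≤ v₁ * t := by positivity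
  have hv₂t : 0 ≤ v₂ * t := by positivity
  have hEq : EqOn (fun x => GamL v₁ v₂ lam xi x t)
      (fun x => gammaTail lam xi t (x / v₁) - gammaTail lam xi t (min (x / v₂) t))
      (uIcc 0 (v₁ * t)) := fun x hx => by
    rw [uIcc_of_le hv₁t] at hx
    exact GamL_of_pos hlam hxi hv₁ hv₂ ht hx.1
  have hbelow : EqOn (fun x => gammaTail lam xi t (min (x / v₂) t))
      (fun x => gammaTail lam xi t (x / v₂)) (uIcc 0 (v₂ * t)) := fun x hx => by
    rw [uIcc_of_le hv₂t] at hx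
    dsimp only
    rw [min_eq_left ((div_le_iff₀ hv₂).2 (by linarith [hx.2]))]
  have habove : EqOn (fun x => gammaTail lam xi t (min (x / v₂) t)) (fun _ => 0)
      (uIcc (v₂ * t) (v₁ * t)) := fun x hx => by
    rw [uIcc_of_le (by nlinarith)] at hx
    dsimp only
    rw [min_eq_right ((le_div_iff₀ hv₂).2 (by linarith [hx.1])), gammaTail_self]
  refine ⟨(((h₁.sub h₂).mono fun x hx => ?_).congr hEq).intervalIntegrable, ?_⟩
  · rw [uIcc_of_le hv₁t] at hx
    exact hx.1
  rw [intervalIntegral.integral_congr hEq,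
    intervalIntegral.integral_sub (hinteg h₁ le_rfl hv₁t) (hinteg h₂ le_rfl hv₁t),
    ← intervalIntegral.integral_add_adjacent_intervals (hinteg h₂ le_rfl hv₂t)
      (hinteg h₂ hv₂t hv₁t),
    intervalIntegral.integral_congr hbelow, intervalIntegral.integral_congr habove,
    intervalIntegral.integral_zero, integral_gammaTail_comp_div hv₁.ne',
    integral_gammaTail_comp_div hv₂.ne']
  ring

lemma integrable_and_integral_ind_mul_GamL (hlam : 0 < lam) (hxi : 0 < xi) (hv : v₂ < v₁)
    (hcase : (v₂ < 0 ∧ 0 < v₁) ∨ (0 < v₂ ∧ v₂ < v₁)) (ht : 0 ≤ t) :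
    Integrable (fun x => ind (min (v₂ * t) 0 < x ∧ x < v₁ * t)
        * (xi * exp (xi / lam) / (v₁ - v₂)) * GamL v₁ v₂ lam xi x t)
      ∧ ∫ x, ind (min (v₂ * t) 0 < x ∧ x < v₁ * t)
          * (xi * exp (xi / lam) / (v₁ - v₂)) * GamL v₁ v₂ lam xi x t
        = xi * exp (xi / lam) * ∫ s in 0..t, gammaTail lam xi t s := by
  obtain ⟨hle, hi, he⟩ : min (v₂ * t) 0 ≤ v₁ * t
      ∧ IntervalIntegrable (fun x => GamL v₁ v₂ lam xi x t) volume
          (min (v₂ * t) 0) (v₁ * t)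
      ∧ ∫ x in min (v₂ * t) 0..v₁ * t, GamL v₁ v₂ lam xi x t
        = (v₁ - v₂) * ∫ s in 0..t, gammaTail lam xi t s := by
    rcases hcase with ⟨hv₂, hv₁⟩ | ⟨hv₂, -⟩
    · rw [min_eq_left (by nlinarith)]
      exact ⟨by nlinarith, intervalIntegrable_and_integral_GamL_of_neg hlam hxi hv₁ hv₂ ht⟩
    · rw [min_eq_right (by positivity)]
      exact ⟨by nlinarith, intervalIntegrable_and_integral_GamL_of_pos hlam hxi hv hv₂ ht⟩
  simp_rw [mul_assoc (ind _)]
  refine ⟨integrable_ind_mul (hi.const_mul _), ?_⟩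
  rw [integral_ind_mul hle, intervalIntegral.integral_const_mul, he]
  field_simp [sub_ne_zero.2 hv.ne']

end GamL

/-- Normalization: the atom mass plus the total mass of the absolutely
continuous part of the reset law equals one. -/
theorem normalization (v₁ v₂ lam xi : ℝ) (hlam : 0 < lam) (hxi : 0 < xi)
    (hv : v₂ < v₁) (hv1 : v₁ ≠ 0) (hv2 : v₂ ≠ 0)
    (hcase : (v₂ < 0 ∧ 0 < v₁) ∨ (0 < v₂ ∧ v₂ < v₁)) :
    ∀ j : ℕ, (j = 1 ∨ j = 2) → ∀ t : ℝ, 0 < t →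
      Real.exp (-(xi * t)) / (1 + lam * t)
        + ∫ x : ℝ, pTil v₁ v₂ lam xi j x t = 1 := by
  intro j hj t ht
  have hvj : vel v₁ v₂ j ≠ 0 := by rcases hj with rfl | rfl <;> simp [vel, hv1, hv2]
  obtain ⟨i₁, e₁⟩ := integrable_and_integral_sign_mul_ind_div (xi := xi) hlam hvj ht.le
  obtain ⟨i₂, e₂⟩ :=
    integrable_and_integral_ind_mul_exp_div (lam := lam) (xi := xi) hv ht.le
  obtain ⟨i₃, e₃⟩ := integrable_and_integral_ind_mul_GamL hlam hxi hv hcase ht.le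
  have hkey := integral_exp_div_add_integral_gammaTail hlam hxi ht.le
  unfold pTil
  rw [integral_add ?_ i₃, integral_add i₁ i₂, e₁, e₂, e₃]
  · have : 1 + lam * t ≠ 0 := by positivity
    field_simp
    linear_combination (1 + lam * t) * hkey
  · exact i₁.add i₂

end TelegraphReset
end
end

section
/- (Corollary 4.3: stationary density.) Fix x ∈ ℝ with x ≠ 0 and j ∈ {1,2}. Then lim_{t→+∞} p̃(x,t|v_j) exists and equals: if v₂ < 0 < v₁, sgn(v_j)·1_{x/v_j>0}·ξe^{−ξx/v_j}/(v_j + λx) + (ξe^{ξ/λ}/(v₁−v₂))·Γ(0, (M_x + 1/λ)ξ); and if 0 < v₂ < v₁, 1_{x>0}·( ξe^{−ξx/v_j}/(v_j + λx) + (ξe^{ξ/λ}/(v₁−v₂))·Γ(0, (x/v₁ + 1/λ)ξ, (x/v₂ + 1/λ)ξ) ). -/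
open MeasureTheory Real Filter Topology Set

noncomputable section

namespace TelegraphReset

lemma integrableOn_aux {a : ℝ} (ha : 0 < a) :
    IntegrableOn (fun u => u⁻¹ * Real.exp (-u)) (Set.Ioi a) := by
  apply Integrable.mono' (((exp_neg_integrableOn_Ioi a one_pos).const_mul a⁻¹))
  · exact (measurable_inv.mul (measurable_exp.comp measurable_neg)).aestronglyMeasurable
  · filter_upwards [ae_restrict_mem measurableSet_Ioi] with u hu
    have hu0 : 0 < u := ha.trans hu
    rw [norm_mul, norm_inv, Real.norm_eq_abs, Real.norm_eq_abs, abs_of_pos hu0,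
      abs_of_pos (Real.exp_pos _)]
    have h1 : -1 * u = -u := by ring
    rw [h1]
    exact mul_le_mul (inv_anti₀ ha hu.le) le_rfl (Real.exp_pos _).le (inv_pos.mpr ha).le

lemma tendsto_iGamma_uGamma {a : ℝ} (ha : 0 < a) {f : ℝ → ℝ} (hf : Tendsto f atTop atTop) :
    Tendsto (fun t => iGamma a (f t)) atTop (𝓝 (uGamma a)) :=
  intervalIntegral_tendsto_integral_Ioi a (integrableOn_aux ha) hf

lemma tendsto_B (v₁ v₂ lam xi : ℝ) (hlam : 0 < lam) (hxi : 0 < xi) (hv : v₂ < v₁) (x : ℝ) :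
    Tendsto (fun t => ind (v₂ * t < x ∧ x < v₁ * t) * lam * Real.exp (-(xi * t)) /
      ((v₁ - v₂) * (1 + lam * t))) atTop (𝓝 0) := by
  have hvd : 0 < v₁ - v₂ := sub_pos.mpr hv
  have hg : Tendsto (fun t : ℝ => lam / (v₁ - v₂) * Real.exp (-(xi * t))) atTop (𝓝 0) := by
    rw [show (0:ℝ) = lam / (v₁ - v₂) * 0 by ring]
    apply Tendsto.const_mul
    exact Real.tendsto_exp_atBot.comp
      (tendsto_neg_atTop_atBot.comp (tendsto_id.const_mul_atTop hxi))
  apply squeeze_zero_norm' _ hg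
  filter_upwards [eventually_ge_atTop (0:ℝ)] with t ht
  have h1 : (0:ℝ) < 1 + lam * t := by positivity
  have hE : 0 < Real.exp (-(xi * t)) := Real.exp_pos _
  have hind : 0 ≤ ind (v₂ * t < x ∧ x < v₁ * t) ∧ ind (v₂ * t < x ∧ x < v₁ * t) ≤ 1 := by
    unfold ind; split <;> norm_num
  have hnum : 0 ≤ ind (v₂ * t < x ∧ x < v₁ * t) * lam * Real.exp (-(xi * t)) :=
    mul_nonneg (mul_nonneg hind.1 hlam.le) hE.le
  rw [Real.norm_eq_abs, abs_of_nonneg (div_nonneg hnum (by positivity))]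
  rw [div_le_iff₀ (by positivity)]
  have hexpand : lam / (v₁ - v₂) * Real.exp (-(xi * t)) * ((v₁ - v₂) * (1 + lam * t)) =
      lam * Real.exp (-(xi * t)) * (1 + lam * t) := by
    field_simp
  rw [hexpand]
  nlinarith [mul_nonneg (mul_nonneg (sub_nonneg.2 hind.2) hlam.le) hE.le,
    mul_nonneg (mul_nonneg hlam.le hE.le) (mul_nonneg hlam.le ht)]

/-- Corollary 4.3: the stationary density of the reset telegraph process. -/
theorem stationary_density (v₁ v₂ lam xi : ℝ) (hlam : 0 < lam) (hxi : 0 < xi)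
    (hv : v₂ < v₁) (hv1 : v₁ ≠ 0) (hv2 : v₂ ≠ 0)
    (hcase : (v₂ < 0 ∧ 0 < v₁) ∨ (0 < v₂ ∧ v₂ < v₁)) :
    ∀ j : ℕ, (j = 1 ∨ j = 2) → ∀ x : ℝ, x ≠ 0 →
      Tendsto (fun t => pTil v₁ v₂ lam xi j x t) atTop
        (𝓝 (if v₂ < 0 then
          Real.sign (vel v₁ v₂ j) * ind (0 < x / vel v₁ v₂ j) * xi *
              Real.exp (-(xi * (x / vel v₁ v₂ j))) / (vel v₁ v₂ j + lam * x)
            + xi * Real.exp (xi / lam) / (v₁ - v₂) *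
                uGamma ((max (x / v₁) (x / v₂) + 1 / lam) * xi)
        else
          ind (0 < x) *
            (xi * Real.exp (-(xi * (x / vel v₁ v₂ j))) / (vel v₁ v₂ j + lam * x)
              + xi * Real.exp (xi / lam) / (v₁ - v₂) *
                  iGamma ((x / v₁ + 1 / lam) * xi) ((x / v₂ + 1 / lam) * xi)))) := by
  intro j hj x hx
  set vj := vel v₁ v₂ j with hvjdef
  have hvj : vj = v₁ ∨ vj = v₂ := by
    rcases hj with h | h <;> simp [hvjdef, vel, h]
  have hTB := tendsto_B v₁ v₂ lam xi hlam hxi hv x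
  -- A-term: eventually constant
  have hTA : Tendsto (fun t => Real.sign vj * ind (0 < x / vj ∧ x / vj < t) * xi *
      Real.exp (-(xi * (x / vj))) / (vj + lam * x)) atTop
      (𝓝 (Real.sign vj * ind (0 < x / vj) * xi *
        Real.exp (-(xi * (x / vj))) / (vj + lam * x))) := by
    apply tendsto_const_nhds.congr'
    filter_upwards [eventually_gt_atTop (x / vj)] with t ht
    have : ind (0 < x / vj ∧ x / vj < t) = ind (0 < x / vj) := by
      unfold ind
      by_cases h : 0 < x / vj <;> simp [h, ht]
    rw [this]
  rcases hcase with ⟨h2, h1⟩ | ⟨h2, _⟩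
  · -- case v₂ < 0 < v₁
    rw [if_pos h2]
    have hM : 0 < max (x / v₁) (x / v₂) := by
      rcases hx.lt_or_gt with hxlt | hxgt
      · exact lt_max_of_lt_right (div_pos_of_neg_of_neg hxlt h2)
      · exact lt_max_of_lt_left (div_pos hxgt h1)
    have ha : 0 < (max (x / v₁) (x / v₂) + 1 / lam) * xi := by positivity
    have hTC : Tendsto (fun t => ind (min (v₂ * t) 0 < x ∧ x < v₁ * t) *
        (xi * Real.exp (xi / lam) / (v₁ - v₂)) * GamL v₁ v₂ lam xi x t) atTop
        (𝓝 (xi * Real.exp (xi / lam) / (v₁ - v₂) *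
          uGamma ((max (x / v₁) (x / v₂) + 1 / lam) * xi))) := by
      have hmap : Tendsto (fun t : ℝ => (t + 1 / lam) * xi) atTop atTop :=
        (tendsto_atTop_add_const_right _ _ tendsto_id).atTop_mul_const hxi
      apply ((tendsto_iGamma_uGamma ha hmap).const_mul
        (xi * Real.exp (xi / lam) / (v₁ - v₂))).congr'
      filter_upwards [eventually_gt_atTop (x / v₂), eventually_gt_atTop (x / v₁)] with t h2t h1t
      have hb2 : v₂ * t < x := by
        rw [div_lt_iff_of_neg h2] at h2t; linarith
      have hb1 : x < v₁ * t := by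
        rw [div_lt_iff₀ h1] at h1t; linarith
      have hbmin : min (v₂ * t) 0 < x := lt_of_le_of_lt (min_le_left _ _) hb2
      rw [GamL, if_pos h2]
      unfold ind
      rw [if_pos ⟨hbmin, hb1⟩]
      ring
    have h := (hTA.add hTB).add hTC
    rw [add_zero] at h
    exact h.congr (fun t => by rw [pTil])
  · -- case 0 < v₂
    rw [if_neg (not_lt.mpr h2.le)]
    have hvjpos : 0 < vj := by rcases hvj with h | h <;> rw [h] <;> [linarith; exact h2]
    have hsign : Real.sign vj = 1 := Real.sign_of_pos hvjpos
    rcases hx.lt_or_gt with hxneg | hxpos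
    · -- x < 0 : everything vanishes
      have hTC : Tendsto (fun t => ind (min (v₂ * t) 0 < x ∧ x < v₁ * t) *
          (xi * Real.exp (xi / lam) / (v₁ - v₂)) * GamL v₁ v₂ lam xi x t) atTop (𝓝 0) := by
        apply tendsto_const_nhds.congr'
        filter_upwards [eventually_ge_atTop (0:ℝ)] with t ht
        have hmin : ¬ (min (v₂ * t) 0 < x) := by
          have : (0:ℝ) ≤ min (v₂ * t) 0 := le_min (by positivity) le_rfl
          linarith
        unfold ind
        rw [if_neg (fun hc => hmin hc.1)]
        ring
      have h := (hTA.add hTB).add hTC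
      rw [add_zero, add_zero] at h
      have hval : Real.sign vj * ind (0 < x / vj) * xi *
          Real.exp (-(xi * (x / vj))) / (vj + lam * x) = ind (0 < x) *
          (xi * Real.exp (-(xi * (x / vj))) / (vj + lam * x)
            + xi * Real.exp (xi / lam) / (v₁ - v₂) *
                iGamma ((x / v₁ + 1 / lam) * xi) ((x / v₂ + 1 / lam) * xi)) := by
        have hdn : ¬ (0 < x / vj) := not_lt.mpr (div_neg_of_neg_of_pos hxneg hvjpos).le
        unfold ind
        rw [if_neg hdn, if_neg (not_lt.mpr hxneg.le)]
        ring
      rw [← hval]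
      exact h.congr (fun t => by rw [pTil])
    · -- 0 < x
      have hTC : Tendsto (fun t => ind (min (v₂ * t) 0 < x ∧ x < v₁ * t) *
          (xi * Real.exp (xi / lam) / (v₁ - v₂)) * GamL v₁ v₂ lam xi x t) atTop
          (𝓝 (xi * Real.exp (xi / lam) / (v₁ - v₂) *
            iGamma ((x / v₁ + 1 / lam) * xi) ((x / v₂ + 1 / lam) * xi))) := by
        apply tendsto_const_nhds.congr'
        filter_upwards [eventually_ge_atTop (x / v₂), eventually_gt_atTop (x / v₁)]
          with t h2t h1t
        have hb1 : x < v₁ * t := by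
          rw [div_lt_iff₀ (h2.trans hv)] at h1t; linarith
        have hbmin : min (v₂ * t) 0 < x := lt_of_le_of_lt (min_le_right _ _) hxpos
        have hmin : min (x / v₂) t = x / v₂ := min_eq_left h2t
        rw [GamL, if_neg (not_lt.mpr h2.le), hmin]
        unfold ind
        rw [if_pos ⟨hbmin, hb1⟩]
        ring
      have h := (hTA.add hTB).add hTC
      rw [add_zero] at h
      have hval : Real.sign vj * ind (0 < x / vj) * xi *
          Real.exp (-(xi * (x / vj))) / (vj + lam * x)
          + xi * Real.exp (xi / lam) / (v₁ - v₂) *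
              iGamma ((x / v₁ + 1 / lam) * xi) ((x / v₂ + 1 / lam) * xi) = ind (0 < x) *
          (xi * Real.exp (-(xi * (x / vj))) / (vj + lam * x)
            + xi * Real.exp (xi / lam) / (v₁ - v₂) *
                iGamma ((x / v₁ + 1 / lam) * xi) ((x / v₂ + 1 / lam) * xi)) := by
        have hdp : 0 < x / vj := div_pos hxpos hvjpos
        unfold ind
        rw [if_pos hdp, if_pos hxpos, hsign]
        ring
      rw [← hval]
      exact h.congr (fun t => by rw [pTil])


end TelegraphReset
end
end
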